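/- arXiv:1307.3462 — 5 statements merged into one kernel-verified Lean document; each statement's English description precedes it below -/
import Mathlib

section
/- Let E be a complex Banach space and let A be sectorial of angle θ ∈ (0,π) with constant K. Let φ ∈ (0,1), ρ > 0, y ∈ E, and set x := (1/2πi)∫_{Γ_{ρ,θ}} (−λ)^{−φ}(A+λ)^{-1}y dλ (so x = A^{−φ}y). Then for every θ' ∈ [0,θ) and every η ∈ [0,φ), sup_{z ∈ Λ_{θ'}} |z|^η ‖x − z(A+z)^{-1}x‖ < ∞; equivalently, z ↦ z^η A(A+z)^{-1}x is bounded on Λ_{θ'}, since A(A+z)^{-1}x = x − z(A+z)^{-1}x. -/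
open Complex MeasureTheory Real Set Filter

noncomputable section

variable {E : Type*} [NormedAddCommGroup E] [NormedSpace ℂ E] [CompleteSpace E]

/-- The sector `Λ_θ = {z : |arg z| ≤ θ}` (contains `0`). -/
def SectorSet (θ : ℝ) : Set ℂ := {z : ℂ | |z.arg| ≤ θ}

/-- `R` is the resolvent `(A + z)⁻¹` of the operator `A` (with domain `D`) at the point `z`. -/
def ResolventAt (D : Submodule ℂ E) (A : D →ₗ[ℂ] E) (R : E →L[ℂ] E) (z : ℂ) : Prop :=
  (∀ u : E, ∃ v : D, (v : E) = R u ∧ A v + z • (v : E) = u) ∧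
  ∀ v : D, R (A v + z • (v : E)) = (v : E)

/-- `A` (with domain `D`) is sectorial of angle `θ` with constant `K` and resolvent family `R`. -/
def SectorialWith (D : Submodule ℂ E) (A : D →ₗ[ℂ] E) (θ K : ℝ)
    (R : ℂ → E →L[ℂ] E) : Prop :=
  1 ≤ K ∧
  IsClosed {q : E × E | ∃ v : D, q.1 = (v : E) ∧ q.2 = A v} ∧
  Dense (D : Set E) ∧
  ∀ z ∈ SectorSet θ, ResolventAt D A (R z) z ∧
    ∀ u : E, (1 + ‖z‖) * ‖R z u‖ ≤ K * ‖u‖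

/-- The contour integral `∫_{Γ_{ρ,θ}} h(λ) dλ`. -/
def gammaIntegral (ρ θ : ℝ) (h : ℂ → E) : E :=
  (-Complex.exp ((θ : ℂ) * Complex.I)) •
      (∫ r in Ioi ρ, h ((r : ℂ) * Complex.exp ((θ : ℂ) * Complex.I))) +
  (Complex.I * (ρ : ℂ)) •
      (∫ φ in Ioo θ (2 * π - θ),
        Complex.exp ((φ : ℂ) * Complex.I) • h ((ρ : ℂ) * Complex.exp ((φ : ℂ) * Complex.I))) +
  Complex.exp (-((θ : ℂ) * Complex.I)) •
      (∫ r in Ioi ρ, h ((r : ℂ) * Complex.exp (-((θ : ℂ) * Complex.I))))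

/-- The contour integral `∫_{-Γ_{ρ,θ}} h(λ) dλ := -∫_{Γ_{ρ,θ}} h(-λ) dλ`. -/
def negGammaIntegral (ρ θ : ℝ) (h : ℂ → E) : E :=
  -gammaIntegral ρ θ (fun z => h (-z))

/-- `(I + μ A)⁻¹ := μ⁻¹ (A + μ⁻¹)⁻¹`, expressed through the resolvent family `R`. -/
def resolventI (R : ℂ → E →L[ℂ] E) (μ : ℂ) : E →L[ℂ] E := μ⁻¹ • R μ⁻¹

/-- `A` (domain `D`, resolvent family `R`) is `T`-sectorial of angle `θ`, constant `K`,
with exponent `p` and `T`-constant `C`. -/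
def TSectorial (D : Submodule ℂ E) (A : D →ₗ[ℂ] E) (θ K : ℝ)
    (R : ℂ → E →L[ℂ] E) (p C : ℝ) : Prop :=
  SectorialWith D A θ K R ∧ 1 < p ∧ 0 < C ∧
  ∀ φ : ℝ, |φ| ≤ θ → ∀ r : ℝ, Real.exp (-1) ≤ r → r ≤ 1 → ∀ n : ℕ, ∀ x : ℕ → E,
    ∃ a : ℕ → ℝ → ℂ, (∀ k, Measurable (a k)) ∧
      (∀ k, ∀ᵐ t ∂(volume.restrict (Ioo (0 : ℝ) (2 * π))), ‖a k t‖ ≤ 1) ∧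
      eLpNorm (fun t : ℝ => ∑ k ∈ Finset.range (n + 1),
          Complex.exp ((k : ℂ) * (t : ℂ) * Complex.I) •
            resolventI R (((r * Real.exp (-(k : ℝ)) : ℝ) : ℂ) *
              Complex.exp ((φ : ℂ) * Complex.I)) (x k))
        (ENNReal.ofReal p) (volume.restrict (Ioo (0 : ℝ) (2 * π)))
      ≤ ENNReal.ofReal C *
        eLpNorm (fun t : ℝ => ∑ k ∈ Finset.range (n + 1), a k t • x k)
          (ENNReal.ofReal p) (volume.restrict (Ioo (0 : ℝ) (2 * π)))

/-- `B` (resolvent family `RB`) admits a bounded `H^∞`-calculus of angle `θB` with constant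
`CB`. -/
def HInftyCalculus (RB : ℂ → E →L[ℂ] E) (θB CB : ℝ) : Prop :=
  0 < CB ∧
  ∀ f : ℂ → ℂ,
    ContinuousOn f {z : ℂ | z ≠ 0 ∧ θB ≤ |z.arg|} →
    DifferentiableOn ℂ f {z : ℂ | θB < |z.arg|} →
    (∃ c > 0, ∃ η > 0, ∀ z : ℂ, z ≠ 0 → θB ≤ |z.arg| →
      ‖f z‖ ≤ c * (‖z‖ / (1 + ‖z‖ ^ 2)) ^ η) →
    ∀ M : ℝ, (∀ z : ℂ, z ≠ 0 → θB ≤ |z.arg| → ‖f z‖ ≤ M) →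
    ∀ u : E, ‖(2 * (π : ℂ) * Complex.I)⁻¹ • gammaIntegral 0 θB (fun z => f z • RB z u)‖
      ≤ CB * M * ‖u‖


/-!
Write `T_z = I - z(A+z)⁻¹` and let `K' = 2K+1`, which bounds `‖λ(A+λ)⁻¹‖` both on `Λ_θ` and on
the disc of radius `ρ`. For `λ` on `Γ_{ρ,θ}` the resolvent identity gives
`T_z (A+λ)⁻¹ y = -λ/(z-λ) • (A+λ)⁻¹ y + z/(z-λ) • (A+z)⁻¹ y`, of norm at most `2K'‖y‖/|z-λ|`.
Since `z ∈ Λ_{θ'}` while `|arg λ| ≥ θ`, we have `|z-λ| ≥ sin((θ-θ')/2) (|z|+|λ|)`, and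
`|z|^η/(|z|+|λ|) ≤ |λ|^(η-1)` as `η ≤ 1`. Hence `|z|^η ‖T_z ((-λ)^(-φ) (A+λ)⁻¹ y)‖ ≲ |λ|^(η-φ-1)`
uniformly in `z`, which is integrable along `Γ_{ρ,θ}` because `η < φ`; pulling `T_z` into the
contour integral bounds `|z|^η ‖T_z x‖`.
-/

theorem Real.cos_sub_le_cos_sub_of_abs_le {θ θ' a b : ℝ} (hθπ : θ ≤ π) (hθ'θ : θ' ≤ θ)
    (ha : |a| ≤ θ') (hb : θ ≤ |b|) (hbπ : |b| ≤ π) : cos (a - b) ≤ cos (θ - θ') := by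
  have hlow : θ - θ' ≤ |a - b| := by
    linarith [abs_sub_abs_le_abs_sub b a, abs_sub_comm a b]
  have hup : |a - b| ≤ θ' + π := by linarith [abs_sub a b]
  rw [← cos_abs (a - b)]
  rcases le_or_gt |a - b| π with h | h
  · exact cos_le_cos_of_nonneg_of_le_pi (by linarith) h hlow
  · rw [← cos_two_pi_sub]
    exact cos_le_cos_of_nonneg_of_le_pi (by linarith) (by linarith) (by linarith)

theorem Complex.re_mul_conj_eq_mul_cos_arg_sub (z l : ℂ) :
    (z * starRingEnd ℂ l).re = ‖z‖ * ‖l‖ * Real.cos (z.arg - l.arg) := by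
  rw [mul_re, conj_re, conj_im, ← norm_mul_cos_arg z, ← norm_mul_sin_arg z,
    ← norm_mul_cos_arg l, ← norm_mul_sin_arg l, Real.cos_sub]
  ring

theorem Complex.sin_half_mul_add_le_norm_sub {θ θ' : ℝ} (hθπ : θ ≤ π) (hθ'θ : θ' ≤ θ)
    {z l : ℂ} (hz : |z.arg| ≤ θ') (hl : θ ≤ |l.arg|) :
    Real.sin ((θ - θ') / 2) * (‖z‖ + ‖l‖) ≤ ‖z - l‖ := by
  have hθ'0 : 0 ≤ θ' := (abs_nonneg _).trans hz
  have hsin : 0 ≤ Real.sin ((θ - θ') / 2) :=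
    Real.sin_nonneg_of_nonneg_of_le_pi (by linarith) (by linarith)
  have hcos := Real.cos_sub_le_cos_sub_of_abs_le hθπ hθ'θ hz hl (abs_arg_le_pi l)
  have hab : 0 ≤ ‖z‖ * ‖l‖ := by positivity
  -- law of cosines, the angle between `z` and `l` being at least `θ - θ'`
  rw [← pow_le_pow_iff_left₀ (by positivity) (norm_nonneg _) two_ne_zero, mul_pow,
    Real.sin_sq_eq_half_sub, mul_div_cancel₀ _ two_ne_zero, Complex.sq_norm, normSq_sub,
    ← Complex.sq_norm, ← Complex.sq_norm, re_mul_conj_eq_mul_cos_arg_sub]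
  nlinarith [mul_le_mul_of_nonneg_left hcos hab, sq_nonneg (‖z‖ - ‖l‖), Real.cos_le_one (θ - θ'),
    Real.neg_one_le_cos (θ - θ')]

theorem Real.rpow_div_add_le_rpow_sub_one {a b η : ℝ} (ha : 0 ≤ a) (hb : 0 < b) (hη0 : 0 ≤ η)
    (hη1 : η ≤ 1) : a ^ η / (a + b) ≤ b ^ (η - 1) := by
  have hab : 0 < a + b := by linarith
  calc a ^ η / (a + b) ≤ (a + b) ^ η / (a + b) := by gcongr; linarith
    _ = (a + b) ^ (η - 1) := (rpow_sub_one hab.ne' η).symm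
    _ ≤ b ^ (η - 1) := rpow_le_rpow_of_nonpos hb (by linarith) (by linarith)

section ResolventAlgebra

variable {V : Type*} [NormedAddCommGroup V] [NormedSpace ℂ V] {D : Submodule ℂ V}
  {A : D →ₗ[ℂ] V} {z w : ℂ} {Rz Rw : V →L[ℂ] V}

theorem ResolventAt.apply_sub_apply (hz : ResolventAt D A Rz z) (hw : ResolventAt D A Rw w)
    (u : V) : Rz u - Rw u = (w - z) • Rz (Rw u) := by
  obtain ⟨vz, hvz, hAvz⟩ := hz.1 u
  obtain ⟨vw, hvw, hAvw⟩ := hw.1 u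
  have hA : A (vz - vw) + z • ((vz - vw : D) : V) = (w - z) • (vw : V) := by
    rw [map_sub, Submodule.coe_sub]
    linear_combination (norm := module) hAvz - hAvw
  have h := hz.2 (vz - vw)
  rw [hA, map_smul, hvw, Submodule.coe_sub, hvz, hvw] at h
  exact h.symm

theorem ResolventAt.apply_sub_smul_apply (hz : ResolventAt D A Rz z)
    (hw : ResolventAt D A Rw w) (hne : z ≠ w) (u : V) :
    Rw u - z • Rz (Rw u) = (-w / (z - w)) • Rw u + (z / (z - w)) • Rz u := by
  have hzw : z - w ≠ 0 := sub_ne_zero.2 hne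
  have h : (z - w) • Rz (Rw u) = Rw u - Rz u := by
    linear_combination (norm := module) hz.apply_sub_apply hw u
  have hX : z • Rz (Rw u) = (z / (z - w)) • (Rw u - Rz u) := by
    rw [← h, smul_smul, div_mul_cancel₀ _ hzw]
  rw [hX]
  match_scalars <;> field_simp
  ring

theorem ResolventAt.norm_apply_sub_smul_apply_le (hz : ResolventAt D A Rz z)
    (hw : ResolventAt D A Rw w) (hne : z ≠ w) {u : V} {M : ℝ}
    (hzM : ‖z‖ * ‖Rz u‖ ≤ M) (hwM : ‖w‖ * ‖Rw u‖ ≤ M) :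
    ‖Rw u - z • Rz (Rw u)‖ ≤ 2 * M / ‖z - w‖ := by
  rw [hz.apply_sub_smul_apply hw hne]
  calc _ ≤ ‖(-w / (z - w)) • Rw u‖ + ‖(z / (z - w)) • Rz u‖ := norm_add_le _ _
    _ = (‖w‖ * ‖Rw u‖ + ‖z‖ * ‖Rz u‖) / ‖z - w‖ := by
        simp only [norm_smul, norm_div, norm_neg]
        ring
    _ ≤ 2 * M / ‖z - w‖ := by gcongr; linarith

theorem ResolventAt.rpow_mul_norm_sub_smul_le {l : ℂ} {Rl : V →L[ℂ] V} {θ θ' η φ M : ℝ}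
    (hθπ : θ ≤ π) (hθ'θ : θ' < θ) (hη0 : 0 ≤ η) (hη1 : η ≤ 1)
    (hz : ResolventAt D A Rz z) (hl : ResolventAt D A Rl l) (hzarg : |z.arg| ≤ θ')
    (hlarg : θ ≤ |l.arg|) (hl0 : l ≠ 0) {y : V} (hzM : ‖z‖ * ‖Rz y‖ ≤ M)
    (hlM : ‖l‖ * ‖Rl y‖ ≤ M) :
    ‖z‖ ^ η * ‖(-l) ^ (-(φ : ℂ)) • Rl y - z • Rz ((-l) ^ (-(φ : ℂ)) • Rl y)‖
      ≤ 2 * M / Real.sin ((θ - θ') / 2) * ‖l‖ ^ (η - φ - 1) := by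
  have hθ'0 : 0 ≤ θ' := (abs_nonneg _).trans hzarg
  have hsin : 0 < Real.sin ((θ - θ') / 2) :=
    Real.sin_pos_of_pos_of_lt_pi (by linarith) (by linarith)
  have hne : z ≠ l := by rintro rfl; linarith
  have hlpos : 0 < ‖l‖ := norm_pos_iff.2 hl0
  have hM : 0 ≤ M := (by positivity : 0 ≤ ‖l‖ * ‖Rl y‖).trans hlM
  have hsep := Complex.sin_half_mul_add_le_norm_sub hθπ hθ'θ.le hzarg hlarg
  have hcpow : ‖(-l) ^ (-(φ : ℂ))‖ = ‖l‖ ^ (-φ) := by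
    simp [Complex.norm_cpow_of_ne_zero (neg_ne_zero.2 hl0)]
  rw [map_smul, smul_comm z, ← smul_sub, norm_smul, hcpow]
  calc ‖z‖ ^ η * (‖l‖ ^ (-φ) * ‖Rl y - z • Rz (Rl y)‖)
      ≤ ‖z‖ ^ η * (‖l‖ ^ (-φ) * (2 * M / (Real.sin ((θ - θ') / 2) * (‖z‖ + ‖l‖)))) := by
        gcongr
        exact (hz.norm_apply_sub_smul_apply_le hl hne hzM hlM).trans
          (div_le_div_of_nonneg_left (by positivity) (by positivity) hsep)
    _ = 2 * M / Real.sin ((θ - θ') / 2) * ‖l‖ ^ (-φ) * (‖z‖ ^ η / (‖z‖ + ‖l‖)) := by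
        field_simp
    _ ≤ 2 * M / Real.sin ((θ - θ') / 2) * ‖l‖ ^ (-φ) * ‖l‖ ^ (η - 1) := by
        gcongr
        exact Real.rpow_div_add_le_rpow_sub_one (norm_nonneg z) hlpos hη0 hη1
    _ = 2 * M / Real.sin ((θ - θ') / 2) * ‖l‖ ^ (η - φ - 1) := by
        rw [mul_assoc, ← Real.rpow_add hlpos]
        ring_nf

end ResolventAlgebra

theorem Complex.norm_ofReal_mul_exp_mul_I {r : ℝ} (hr : 0 ≤ r) (t : ℝ) :
    ‖(r : ℂ) * exp (t * I)‖ = r := by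
  rw [norm_mul, norm_exp_ofReal_mul_I, norm_real, Real.norm_of_nonneg hr, mul_one]

theorem Complex.arg_ofReal_mul_exp_mul_I {r t : ℝ} (hr : 0 < r) (ht : t ∈ Ioc (-π) π) :
    ((r : ℂ) * exp (t * I)).arg = t := by
  rw [arg_real_mul _ hr, exp_mul_I, arg_cos_add_sin_mul_I ht]

theorem Complex.le_abs_arg_ofReal_mul_exp_mul_I {r θ ψ : ℝ} (hr : 0 < r) (hθ : 0 ≤ θ)
    (hψ : ψ ∈ Ioo θ (2 * π - θ)) : θ ≤ |((r : ℂ) * exp (ψ * I)).arg| := by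
  obtain ⟨hθψ, hψθ⟩ := hψ
  rcases le_or_gt ψ π with h | h
  · rw [arg_ofReal_mul_exp_mul_I hr ⟨by linarith, h⟩, abs_of_nonneg (by linarith)]
    exact hθψ.le
  · have hper : exp (ψ * I) = exp (((ψ - 2 * π : ℝ) : ℂ) * I) := by
      push_cast
      exact (exp_mul_I_periodic.sub_eq (ψ : ℂ)).symm
    rw [hper, arg_ofReal_mul_exp_mul_I hr ⟨by linarith, by linarith⟩,
      abs_of_neg (by linarith)]
    linarith

/-- Integrability of `f` is not needed: otherwise `∫ f = 0` by convention. -/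
theorem ContinuousLinearMap.norm_map_integral_le {F α : Type*} [NormedAddCommGroup F]
    [NormedSpace ℂ F] [CompleteSpace F] [MeasurableSpace α] {μ : Measure α} (T : E →L[ℂ] F)
    {f : α → E} {g : α → ℝ} (hg : Integrable g μ) (h : ∀ᵐ a ∂μ, ‖T (f a)‖ ≤ g a) :
    ‖T (∫ a, f a ∂μ)‖ ≤ ∫ a, g a ∂μ := by
  by_cases hf : Integrable f μ
  · rw [← T.integral_comp_comm hf]
    exact norm_integral_le_of_norm_le hg h
  · rw [integral_undef hf, map_zero, norm_zero]
    exact integral_nonneg_of_ae (h.mono fun a ha => (norm_nonneg _).trans ha)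

theorem norm_map_gammaIntegral_le {F : Type*} [NormedAddCommGroup F] [NormedSpace ℂ F]
    [CompleteSpace F] (T : E →L[ℂ] F) {ρ θ : ℝ} (hρ : 0 < ρ) (hθ0 : 0 ≤ θ) (hθπ : θ < π) {h : ℂ → E}
    {g : ℝ → ℝ} (hg : IntegrableOn g (Ioi ρ))
    (hbound : ∀ l : ℂ, l ≠ 0 → θ ≤ |l.arg| → |l.arg| ≤ θ ∨ ‖l‖ ≤ ρ → ‖T (h l)‖ ≤ g ‖l‖) :
    ‖T (gammaIntegral ρ θ h)‖ ≤ 2 * (∫ r in Ioi ρ, g r) + ρ * (2 * π - 2 * θ) * g ρ := by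
  have hray : ∀ t : ℝ, |t| = θ →
      ‖T (∫ r in Ioi ρ, h (r * exp (t * I)))‖ ≤ ∫ r in Ioi ρ, g r := by
    intro t ht
    have htI : t ∈ Ioc (-π) π := ⟨by linarith [neg_abs_le t], by linarith [le_abs_self t]⟩
    refine T.norm_map_integral_le hg ((ae_restrict_iff' measurableSet_Ioi).2
      (ae_of_all _ fun r (hr : ρ < r) => ?_))
    have hr0 : 0 < r := hρ.trans hr
    have hnorm := norm_ofReal_mul_exp_mul_I hr0.le t
    have harg : |((r : ℂ) * exp (t * I)).arg| = θ := by
      rw [arg_ofReal_mul_exp_mul_I hr0 htI, ht]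
    simpa only [hnorm] using
      hbound _ (by rw [← norm_ne_zero_iff, hnorm]; exact hr0.ne') harg.ge (Or.inl harg.le)
  have harc : ‖T (∫ ψ in Ioo θ (2 * π - θ), exp (ψ * I) • h (ρ * exp (ψ * I)))‖
      ≤ (2 * π - 2 * θ) * g ρ := by
    calc _ ≤ ∫ _ in Ioo θ (2 * π - θ), g ρ := by
          refine T.norm_map_integral_le (integrableOn_const measure_Ioo_lt_top.ne) ?_
          refine (ae_restrict_iff' measurableSet_Ioo).2 (ae_of_all _ fun ψ hψ => ?_)
          have hnorm := norm_ofReal_mul_exp_mul_I hρ.le ψ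
          rw [map_smul, norm_smul, norm_exp_ofReal_mul_I, one_mul]
          simpa only [hnorm] using hbound _ (by rw [← norm_ne_zero_iff, hnorm]; exact hρ.ne')
            (le_abs_arg_ofReal_mul_exp_mul_I hρ hθ0 hψ) (Or.inr hnorm.le)
      _ = (2 * π - 2 * θ) * g ρ := by
          rw [setIntegral_const, Real.volume_real_Ioo_of_le (by linarith), smul_eq_mul]
          ring
  have hneg : -((θ : ℂ) * I) = ((-θ : ℝ) : ℂ) * I := by push_cast; ring
  rw [gammaIntegral, hneg]
  simp only [map_add, map_smul]
  refine norm_add₃_le.trans ?_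
  simp only [norm_smul, norm_neg, norm_exp_ofReal_mul_I, norm_mul, norm_I, norm_real,
    Real.norm_of_nonneg hρ.le, one_mul]
  calc _ ≤ (∫ r in Ioi ρ, g r) + ρ * ((2 * π - 2 * θ) * g ρ) + ∫ r in Ioi ρ, g r :=
        add_le_add (add_le_add (hray θ (abs_of_nonneg hθ0))
          (mul_le_mul_of_nonneg_left harc hρ.le))
          (hray (-θ) (by rw [abs_neg, abs_of_nonneg hθ0]))
    _ = _ := by ring

theorem bounded_resolvent_decay_general
    {E : Type*} [NormedAddCommGroup E] [NormedSpace ℂ E] [CompleteSpace E]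
    (D : Submodule ℂ E) (A : D →ₗ[ℂ] E) (θ K : ℝ) (R : ℂ → E →L[ℂ] E)
    (hθπ : θ < π) (hsec : SectorialWith D A θ K R)
    (φ : ℝ) (hφ1 : φ < 1) (ρ : ℝ) (hρ : 0 < ρ)
    (hdisc : ∀ z : ℂ, ‖z‖ ≤ ρ → ResolventAt D A (R z) z ∧
      ∀ u : E, (1 + ‖z‖) * ‖R z u‖ ≤ (2 * K + 1) * ‖u‖)
    (y x : E)
    (hx : x = (2 * (π : ℂ) * Complex.I)⁻¹ •
      gammaIntegral ρ θ (fun z => ((-z) ^ (-(φ : ℂ))) • R z y)) :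
    ∀ θ' : ℝ, 0 ≤ θ' → θ' < θ → ∀ η : ℝ, 0 ≤ η → η < φ →
      ∃ M : ℝ, ∀ z ∈ SectorSet θ', ‖z‖ ^ η * ‖x - z • R z x‖ ≤ M := by
  intro θ' hθ'0 hθ'θ η hη0 hηφ
  have hres : ∀ l : ℂ, |l.arg| ≤ θ ∨ ‖l‖ ≤ ρ →
      ResolventAt D A (R l) l ∧ ‖l‖ * ‖R l y‖ ≤ (2 * K + 1) * ‖y‖ := by
    rintro l (hl | hl)
    · obtain ⟨hRl, hbd⟩ := hsec.2.2.2 l hl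
      refine ⟨hRl, ?_⟩
      nlinarith [hbd y, norm_nonneg (R l y), norm_nonneg y, norm_nonneg l]
    · obtain ⟨hRl, hbd⟩ := hdisc l hl
      refine ⟨hRl, ?_⟩
      nlinarith [hbd y, norm_nonneg (R l y)]
  set C := 2 * ((2 * K + 1) * ‖y‖) / Real.sin ((θ - θ') / 2)
  refine ⟨(2 * π)⁻¹ * (2 * (∫ r in Ioi ρ, C * r ^ (η - φ - 1)) +
    ρ * (2 * π - 2 * θ) * (C * ρ ^ (η - φ - 1))), fun z hz => ?_⟩
  obtain ⟨hRz, hzbd⟩ := hres z (Or.inl (hz.trans hθ'θ.le))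
  set T : E →L[ℂ] E := ((‖z‖ ^ η : ℝ) : ℂ) • (ContinuousLinearMap.id ℂ E - z • R z)
  have hT : ∀ v, ‖T v‖ = ‖z‖ ^ η * ‖v - z • R z v‖ := fun v => by
    simp [T, norm_smul, Real.rpow_nonneg (norm_nonneg z)]
  have hx' : ‖z‖ ^ η * ‖x - z • R z x‖ =
      (2 * π)⁻¹ * ‖T (gammaIntegral ρ θ fun l => (-l) ^ (-(φ : ℂ)) • R l y)‖ := by
    rw [← hT, hx, map_smul, norm_smul]
    simp [Real.pi_pos.le]
  rw [hx']
  gcongr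
  refine norm_map_gammaIntegral_le T hρ (hθ'0.trans hθ'θ.le) hθπ
    ((integrableOn_Ioi_rpow_of_lt (by linarith) hρ).const_mul C) fun l hl0 hlarg hl => ?_
  obtain ⟨hRl, hlbd⟩ := hres l hl
  rw [hT]
  exact hRz.rpow_mul_norm_sub_smul_le hθπ.le hθ'θ hη0 (by linarith) hRl hz hlarg hl0 hzbd hlbd

/-- Lemma 2.3: if `A ∈ 𝒫(θ)` and `x = A^{-φ} y` is given by the Dunford
integral over `Γ_{ρ,θ}` (with `ρ > 0` small enough that the closed disc of radius `ρ` lies in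
the resolvent set of `-A`, as provided by the sectoriality extension), then for every
`θ' ∈ [0,θ)` and `η ∈ [0,φ)` the function `z ↦ z^η A(A+z)⁻¹ x = z^η (x - z(A+z)⁻¹x)` is
bounded on `Λ_{θ'}`. -/
theorem bounded_resolvent_decay
    {E : Type*} [NormedAddCommGroup E] [NormedSpace ℂ E] [CompleteSpace E]
    (D : Submodule ℂ E) (A : D →ₗ[ℂ] E) (θ K : ℝ) (R : ℂ → E →L[ℂ] E)
    (hθ0 : 0 < θ) (hθπ : θ < π) (hsec : SectorialWith D A θ K R)
    (φ : ℝ) (hφ0 : 0 < φ) (hφ1 : φ < 1) (ρ : ℝ) (hρ : 0 < ρ)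
    (hdisc : ∀ z : ℂ, ‖z‖ ≤ ρ → ResolventAt D A (R z) z ∧
      ∀ u : E, (1 + ‖z‖) * ‖R z u‖ ≤ (2 * K + 1) * ‖u‖)
    (y x : E)
    (hx : x = (2 * (π : ℂ) * Complex.I)⁻¹ •
      gammaIntegral ρ θ (fun z => ((-z) ^ (-(φ : ℂ))) • R z y)) :
    ∀ θ' : ℝ, 0 ≤ θ' → θ' < θ → ∀ η : ℝ, 0 ≤ η → η < φ →
      ∃ M : ℝ, ∀ z ∈ SectorSet θ', ‖z‖ ^ η * ‖x - z • R z x‖ ≤ M :=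
  bounded_resolvent_decay_general D A θ K R hθπ hsec φ hφ1 ρ hρ hdisc y x hx
end
end

section
/- Let E be a complex Banach space, A sectorial of angle θ_A, B sectorial of angle θ_B, with θ_A + θ_B > π and A, B resolvent commuting. Let w ∈ ℂ with Re w < 0 and ρ > 0, and define L := (1/2πi)∫_{Γ_{ρ,θ_B}} (A−λ)^{-1}(B+λ)^{-1}(−λ)^w dλ ∈ L(E) and B^w := (1/2πi)∫_{Γ_{ρ,θ_B}} (−λ)^w (B+λ)^{-1} dλ ∈ L(E), where (A−λ)^{-1} := (A+(−λ))^{-1} (note −λ ∈ Λ_{θ_A} for λ ∈ Γ_{ρ,θ_B} since π − θ_B < θ_A). Then for every u ∈ E one has Lu ∈ D(A) and A(Lu) = B^w u − (1/2πi)∫_{Γ_{ρ,θ_B}} (A−λ)^{-1}(B+λ)^{-1}(−λ)^{1+w} u dλ. -/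
open Complex MeasureTheory Real Set Filter

noncomputable section

variable {E : Type*} [NormedAddCommGroup E] [NormedSpace ℂ E] [CompleteSpace E]

/-!
Write `A⁻¹ = (A + 0)⁻¹`. For `λ` on `Γ_{ρ,θ_B}` the resolvent identity
`A⁻¹ = (A - λ)⁻¹ - λ A⁻¹ (A - λ)⁻¹` gives
`(-λ)^w (A - λ)⁻¹ x = A⁻¹((-λ)^w x) - A⁻¹((-λ)^{1+w} (A - λ)⁻¹ x)`.
With `x = (B + λ)⁻¹ u`, both integrands on the right are continuous on the contour and decay like
`|λ|^{Re w - 1}`, so they are integrable and the bounded operator `A⁻¹` commutes with the contour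
integral: `L u = A⁻¹ (B^w u - M u)` with `M u` the last integral. Hence `L u ∈ D(A)` and
`A (L u) = B^w u - M u`.
-/

section Resolvent

variable {F : Type*} [NormedAddCommGroup F] [NormedSpace ℂ F] {D : Submodule ℂ F}
  {A : D →ₗ[ℂ] F}

theorem ResolventAt.apply_eq_add_smul {R R' : F →L[ℂ] F} {z z' : ℂ}
    (h : ResolventAt D A R z) (h' : ResolventAt D A R' z') (x : F) :
    R x = R' x + (z' - z) • R (R' x) := by
  obtain ⟨v, hv, hAv⟩ := h'.1 x
  have hx : x = (A v + z • (v : F)) + (z' - z) • (v : F) := by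
    rw [← hAv]; module
  rw [← hv, hx, map_add, map_smul, h.2 v]

theorem ResolventAt.neg_cpow_smul_eq_sub {R₀ R : F →L[ℂ] F} {l : ℂ}
    (h₀ : ResolventAt D A R₀ 0) (h : ResolventAt D A R (-l)) (hl : l ≠ 0) (w : ℂ) (x : F) :
    (-l) ^ w • R x = R₀ ((-l) ^ w • x) - R₀ ((-l) ^ (1 + w) • R x) := by
  rw [cpow_add _ _ (neg_ne_zero.2 hl), cpow_one, map_smul, map_smul,
    h₀.apply_eq_add_smul h x]
  module

def IsResolventOn (D : Submodule ℂ F) (A : D →ₗ[ℂ] F) (R : ℂ → F →L[ℂ] F) (s : Set ℂ)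
    (K : ℝ) : Prop :=
  ∀ z ∈ s, ResolventAt D A (R z) z ∧ ∀ u : F, (1 + ‖z‖) * ‖R z u‖ ≤ K * ‖u‖

theorem SectorialWith.isResolventOn {θ K : ℝ} {R : ℂ → F →L[ℂ] F}
    (h : SectorialWith D A θ K R) : IsResolventOn D A R (SectorSet θ) K :=
  h.2.2.2

namespace IsResolventOn

variable {R : ℂ → F →L[ℂ] F} {s t : Set ℂ} {K K' : ℝ} {z : ℂ}

theorem mono (h : IsResolventOn D A R s K) (hts : t ⊆ s) : IsResolventOn D A R t K :=
  fun z hz => h z (hts hz)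

theorem mono_const (h : IsResolventOn D A R s K) (hK : K ≤ K') : IsResolventOn D A R s K' :=
  fun z hz => ⟨(h z hz).1, fun u => ((h z hz).2 u).trans (by gcongr)⟩

theorem union (hs : IsResolventOn D A R s K) (ht : IsResolventOn D A R t K) :
    IsResolventOn D A R (s ∪ t) K
  | z, .inl hz => hs z hz
  | z, .inr hz => ht z hz

theorem norm_apply_le (h : IsResolventOn D A R s K) (hz : z ∈ s) (u : F) :
    ‖R z u‖ ≤ K * ‖u‖ :=
  (le_mul_of_one_le_left (norm_nonneg _) (le_add_of_nonneg_right (norm_nonneg z))).trans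
    ((h z hz).2 u)

theorem norm_mul_norm_apply_le (h : IsResolventOn D A R s K) (hz : z ∈ s) (u : F) :
    ‖z‖ * ‖R z u‖ ≤ K * ‖u‖ :=
  (mul_le_mul_of_nonneg_right (le_add_of_nonneg_left zero_le_one) (norm_nonneg _)).trans
    ((h z hz).2 u)

theorem opNorm_le (h : IsResolventOn D A R s K) (hK : 0 ≤ K) (hz : z ∈ s) : ‖R z‖ ≤ K :=
  ContinuousLinearMap.opNorm_le_bound _ hK (h.norm_apply_le hz)

theorem lipschitzOnWith (h : IsResolventOn D A R s K) (hK : 0 ≤ K) :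
    LipschitzOnWith (K ^ 2).toNNReal R s := by
  refine LipschitzOnWith.of_dist_le_mul fun z hz z' hz' => ?_
  have hdiff : R z - R z' = (z' - z) • (R z).comp (R z') := by
    ext x
    simp [(h z hz).1.apply_eq_add_smul (h z' hz').1 x]
  have hcomp : ‖(R z).comp (R z')‖ ≤ K * K :=
    ((R z).opNorm_comp_le _).trans (mul_le_mul (h.opNorm_le hK hz) (h.opNorm_le hK hz')
      (norm_nonneg _) hK)
  rw [dist_eq_norm, hdiff, norm_smul, dist_eq_norm, norm_sub_rev,
    Real.coe_toNNReal _ (sq_nonneg K)]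
  calc ‖z - z'‖ * ‖(R z).comp (R z')‖ ≤ ‖z - z'‖ * (K * K) := by gcongr
    _ = K ^ 2 * ‖z - z'‖ := by ring

theorem continuousOn (h : IsResolventOn D A R s K) (hK : 0 ≤ K) : ContinuousOn R s :=
  (h.lipschitzOnWith hK).continuousOn

theorem sq_norm_mul_norm_apply_apply_le {D' : Submodule ℂ F} {A' : D' →ₗ[ℂ] F}
    {R' : ℂ → F →L[ℂ] F} {s' : Set ℂ} (h : IsResolventOn D A R s K)
    (h' : IsResolventOn D' A' R' s' K') (hK : 0 ≤ K) (hz : -z ∈ s) (hz' : z ∈ s') (u : F) :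
    ‖z‖ ^ 2 * ‖R (-z) (R' z u)‖ ≤ K * (K' * ‖u‖) :=
  calc ‖z‖ ^ 2 * ‖R (-z) (R' z u)‖ = ‖z‖ * (‖-z‖ * ‖R (-z) (R' z u)‖) := by
        rw [norm_neg]; ring
    _ ≤ ‖z‖ * (K * ‖R' z u‖) :=
        mul_le_mul_of_nonneg_left (h.norm_mul_norm_apply_le hz _) (norm_nonneg z)
    _ = K * (‖z‖ * ‖R' z u‖) := by ring
    _ ≤ K * (K' * ‖u‖) := mul_le_mul_of_nonneg_left (h'.norm_mul_norm_apply_le hz' u) hK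

end IsResolventOn

end Resolvent

theorem Complex.abs_arg_neg_of_arg_ne_zero {z : ℂ} (hz : z.arg ≠ 0) :
    |(-z).arg| = π - |z.arg| := by
  rcases lt_or_ge z.im 0 with him | him
  · rw [arg_neg_eq_arg_add_pi_of_im_neg him, abs_of_neg (arg_neg_iff.2 him),
      abs_of_pos (by linarith [neg_pi_lt_arg z])]
    ring
  · have hsub : 0 < z.im ∨ z.im = 0 ∧ z.re < 0 := by
      rcases him.lt_or_eq with him | him
      · exact .inl him
      · exact .inr ⟨him.symm, not_le.1 fun hre => hz (arg_eq_zero_iff.2 ⟨hre, him.symm⟩)⟩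
    rw [arg_neg_eq_arg_sub_pi_iff.2 hsub, abs_of_nonneg (arg_nonneg_iff.2 him),
      abs_of_nonpos (by linarith [arg_le_pi z])]
    ring

theorem Complex.neg_mem_slitPlane_of_arg_ne_zero {z : ℂ} (hz : z.arg ≠ 0) : -z ∈ slitPlane := by
  rw [mem_slitPlane_iff, neg_re, neg_im, neg_pos, Ne, neg_eq_zero]
  by_contra! h
  exact hz (arg_eq_zero_iff.2 h)

theorem Complex.norm_cpow_le_rpow_mul_exp (z s : ℂ) :
    ‖z ^ s‖ ≤ ‖z‖ ^ s.re * Real.exp (π * |s.im|) := by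
  refine (norm_cpow_le z s).trans ?_
  rw [div_eq_mul_inv, ← Real.exp_neg]
  gcongr
  calc -(z.arg * s.im) ≤ |z.arg| * |s.im| := by rw [← abs_mul]; exact neg_le_abs _
    _ ≤ π * |s.im| := by gcongr; exact abs_arg_le_pi z

theorem zero_mem_sectorSet {θ : ℝ} (hθ : 0 ≤ θ) : (0 : ℂ) ∈ SectorSet θ := by
  simpa [SectorSet] using hθ

/-- The trace of `Γ_{ρ,θ}` when `ρ > 0` and `0 < θ < π`. -/
def gammaContour (ρ θ : ℝ) : Set ℂ :=
  {z | ρ ≤ ‖z‖ ∧ |z.arg| = θ} ∪ {z | ‖z‖ = ρ ∧ θ ≤ |z.arg|}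

section Contour

variable {ρ θ : ℝ} {z : ℂ}

theorem le_norm_of_mem_gammaContour (hz : z ∈ gammaContour ρ θ) : ρ ≤ ‖z‖ := by
  rcases hz with h | h
  exacts [h.1, h.1.ge]

theorem le_abs_arg_of_mem_gammaContour (hz : z ∈ gammaContour ρ θ) : θ ≤ |z.arg| := by
  rcases hz with h | h
  exacts [h.2.ge, h.2]

theorem arg_ne_zero_of_mem_gammaContour (hθ : 0 < θ) (hz : z ∈ gammaContour ρ θ) :
    z.arg ≠ 0 :=
  abs_pos.1 (hθ.trans_le (le_abs_arg_of_mem_gammaContour hz))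

theorem gammaContour_subset_sectorSet_union_closedBall :
    gammaContour ρ θ ⊆ SectorSet θ ∪ Metric.closedBall 0 ρ := by
  rintro z (h | h)
  · exact .inl h.2.le
  · exact .inr (mem_closedBall_zero_iff.2 h.1.le)

theorem neg_mem_sectorSet_of_mem_gammaContour {θ' : ℝ} (hθ : 0 < θ) (hθ' : π - θ ≤ θ')
    (hz : z ∈ gammaContour ρ θ) : -z ∈ SectorSet θ' := by
  change |(-z).arg| ≤ θ'
  rw [abs_arg_neg_of_arg_ne_zero (arg_ne_zero_of_mem_gammaContour hθ hz)]
  linarith [le_abs_arg_of_mem_gammaContour hz]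

theorem ofReal_mul_exp_mem_gammaContour_abs {r ψ : ℝ} (hψ : ψ ∈ Ioc (-π) π) (hr : 0 < r)
    (hρr : ρ ≤ r) : (r : ℂ) * exp (ψ * I) ∈ gammaContour ρ |ψ| := by
  refine .inl ⟨?_, ?_⟩
  · rwa [norm_mul, norm_exp_ofReal_mul_I, mul_one, norm_real, Real.norm_of_nonneg hr.le]
  · rw [arg_real_mul _ hr, arg_exp_mul_I,
      (toIocMod_eq_self _).2 (by simpa [← sub_eq_add_neg, two_mul] using hψ)]

theorem ofReal_mul_exp_mem_gammaContour_of_mem_Icc {φ : ℝ} (hρ : 0 < ρ) (hθ : 0 ≤ θ)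
    (hφ : φ ∈ Icc θ (2 * π - θ)) : (ρ : ℂ) * exp (φ * I) ∈ gammaContour ρ θ := by
  refine .inr ⟨?_, ?_⟩
  · rw [norm_mul, norm_exp_ofReal_mul_I, mul_one, norm_real, Real.norm_of_nonneg hρ.le]
  · rw [arg_real_mul _ hρ, arg_exp_mul_I]
    obtain ⟨hθφ, hφθ⟩ := hφ
    have hπ := Real.pi_pos
    rcases le_or_gt φ π with hφπ | hφπ
    · rw [(toIocMod_eq_self _).2 ⟨by linarith, by linarith⟩, abs_of_nonneg (by linarith)]
      exact hθφ
    · rw [(toIocMod_eq_iff _ (c := φ - 2 * π)).2 ⟨⟨by linarith, by linarith⟩, 1, by simp⟩,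
        abs_of_nonpos (by linarith)]
      linarith

theorem ofReal_mul_exp_mem_gammaContour {r : ℝ} (hρ : 0 ≤ ρ) (hθ : θ ∈ Ico 0 π)
    (hr : r ∈ Ioi ρ) : (r : ℂ) * exp (θ * I) ∈ gammaContour ρ θ := by
  simpa [abs_of_nonneg hθ.1] using ofReal_mul_exp_mem_gammaContour_abs
    ⟨by linarith [hθ.1, Real.pi_pos], hθ.2.le⟩ (hρ.trans_lt hr) (le_of_lt hr)

theorem ofReal_mul_exp_neg_mem_gammaContour {r : ℝ} (hρ : 0 ≤ ρ) (hθ : θ ∈ Ico 0 π)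
    (hr : r ∈ Ioi ρ) : (r : ℂ) * exp (-(θ * I)) ∈ gammaContour ρ θ := by
  simpa [abs_of_nonneg hθ.1] using ofReal_mul_exp_mem_gammaContour_abs (ψ := -θ)
    ⟨by linarith [hθ.2], by linarith [hθ.1, Real.pi_pos]⟩ (hρ.trans_lt hr) (le_of_lt hr)

end Contour

theorem integrableOn_Ioi_comp_ofReal_mul {F : Type*} [NormedAddCommGroup F] {ρ C a : ℝ}
    {f : ℂ → F} {S : Set ℂ} {c : ℂ} (hρ : 0 < ρ) (hc : ‖c‖ = 1)
    (hS : ∀ r ∈ Ioi ρ, (r : ℂ) * c ∈ S) (hf : ContinuousOn f S)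
    (ha : a < -1) (hbound : ∀ z ∈ S, ‖f z‖ ≤ C * ‖z‖ ^ a) :
    IntegrableOn (fun r : ℝ => f (r * c)) (Ioi ρ) := by
  refine ((integrableOn_Ioi_rpow_of_lt ha hρ).const_mul C).mono' ?_ ?_
  · exact (hf.comp (by fun_prop : Continuous fun r : ℝ => (r : ℂ) * c).continuousOn hS)
      |>.aestronglyMeasurable measurableSet_Ioi
  · refine (ae_restrict_iff' measurableSet_Ioi).2 (ae_of_all _ fun r hr => ?_)
    have := hbound _ (hS r hr)
    rwa [norm_mul, hc, mul_one, norm_real, Real.norm_of_nonneg (hρ.trans hr).le] at this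

section ContourIntegral

variable {F : Type*} [NormedAddCommGroup F] [NormedSpace ℂ F] {ρ θ : ℝ}

def GammaIntegrable (ρ θ : ℝ) (f : ℂ → F) : Prop :=
  IntegrableOn (fun r : ℝ => f (r * exp (θ * I))) (Ioi ρ) ∧
  IntegrableOn (fun φ : ℝ => exp (φ * I) • f (ρ * exp (φ * I))) (Ioo θ (2 * π - θ)) ∧
  IntegrableOn (fun r : ℝ => f (r * exp (-(θ * I)))) (Ioi ρ)

theorem gammaIntegral_congr (hρ : 0 < ρ) (hθ : θ ∈ Ico 0 π) {f g : ℂ → F}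
    (h : EqOn f g (gammaContour ρ θ)) : gammaIntegral ρ θ f = gammaIntegral ρ θ g := by
  unfold gammaIntegral
  rw [setIntegral_congr_fun measurableSet_Ioi
      fun r hr => h (ofReal_mul_exp_mem_gammaContour hρ.le hθ hr),
    setIntegral_congr_fun measurableSet_Ioi
      fun r hr => h (ofReal_mul_exp_neg_mem_gammaContour hρ.le hθ hr),
    setIntegral_congr_fun measurableSet_Ioo fun φ hφ => by
      rw [h (ofReal_mul_exp_mem_gammaContour_of_mem_Icc hρ hθ.1 (Ioo_subset_Icc_self hφ))]]

theorem gammaIntegral_sub {f g : ℂ → F} (hf : GammaIntegrable ρ θ f)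
    (hg : GammaIntegrable ρ θ g) :
    gammaIntegral ρ θ (fun z => f z - g z) = gammaIntegral ρ θ f - gammaIntegral ρ θ g := by
  unfold gammaIntegral
  simp only [smul_sub]
  rw [integral_sub hf.1 hg.1, integral_sub hf.2.1 hg.2.1, integral_sub hf.2.2 hg.2.2]
  module

theorem GammaIntegrable.of_norm_le (hρ : 0 < ρ) (hθ : θ ∈ Ico 0 π) {f : ℂ → F} {C a : ℝ}
    (hf : ContinuousOn f (gammaContour ρ θ)) (ha : a < -1)
    (hbound : ∀ z ∈ gammaContour ρ θ, ‖f z‖ ≤ C * ‖z‖ ^ a) : GammaIntegrable ρ θ f := by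
  refine ⟨integrableOn_Ioi_comp_ofReal_mul hρ (norm_exp_ofReal_mul_I θ)
      (fun r hr => ofReal_mul_exp_mem_gammaContour hρ.le hθ hr) hf ha hbound, ?_,
    integrableOn_Ioi_comp_ofReal_mul hρ (by simp [norm_exp])
      (fun r hr => ofReal_mul_exp_neg_mem_gammaContour hρ.le hθ hr) hf ha hbound⟩
  have harc : ContinuousOn (fun φ : ℝ => f ((ρ : ℂ) * exp (φ * I))) (Icc θ (2 * π - θ)) :=
    hf.comp (by fun_prop : Continuous fun φ : ℝ => (ρ : ℂ) * exp (φ * I)).continuousOn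
      fun φ hφ => ofReal_mul_exp_mem_gammaContour_of_mem_Icc hρ hθ.1 hφ
  exact ((by fun_prop : Continuous fun φ : ℝ => exp (φ * I)).continuousOn.smul harc
    |>.integrableOn_Icc).mono_set Ioo_subset_Icc_self

theorem GammaIntegrable.neg_cpow_smul (hρ : 0 < ρ) (hθ : θ ∈ Ioo 0 π) {G : ℂ → F} {s : ℂ}
    {n : ℕ} {M : ℝ} (hG : ContinuousOn G (gammaContour ρ θ)) (hs : s.re < n - 1)
    (hGle : ∀ z ∈ gammaContour ρ θ, ‖z‖ ^ n * ‖G z‖ ≤ M) :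
    GammaIntegrable ρ θ fun z => (-z) ^ s • G z := by
  have hcpow : ContinuousOn (fun z : ℂ => (-z) ^ s) (gammaContour ρ θ) := fun z hz =>
    ((continuousAt_cpow_const (neg_mem_slitPlane_of_arg_ne_zero
      (arg_ne_zero_of_mem_gammaContour hθ.1 hz))).comp continuousAt_neg).continuousWithinAt
  refine .of_norm_le hρ ⟨hθ.1.le, hθ.2⟩ (hcpow.smul hG) (a := s.re - n)
    (C := Real.exp (π * |s.im|) * M) (by linarith) fun z hz => ?_
  have hz0 : 0 < ‖z‖ := hρ.trans_le (le_norm_of_mem_gammaContour hz)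
  have hsplit : ‖z‖ ^ s.re = ‖z‖ ^ (s.re - n) * ‖z‖ ^ n := by
    rw [Real.rpow_sub_natCast hz0.ne', div_mul_cancel₀ _ (pow_pos hz0 n).ne']
  calc ‖(-z) ^ s • G z‖ ≤ ‖z‖ ^ s.re * Real.exp (π * |s.im|) * ‖G z‖ := by
        rw [norm_smul]; gcongr; simpa using norm_cpow_le_rpow_mul_exp (-z) s
    _ = Real.exp (π * |s.im|) * ‖z‖ ^ (s.re - n) * (‖z‖ ^ n * ‖G z‖) := by rw [hsplit]; ring
    _ ≤ Real.exp (π * |s.im|) * ‖z‖ ^ (s.re - n) * M := by gcongr; exact hGle z hz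
    _ = _ := by ring

variable {F' : Type*} [NormedAddCommGroup F'] [NormedSpace ℂ F']

theorem ContinuousLinearMap.gammaIntegrable_comp (L : F →L[ℂ] F') {f : ℂ → F}
    (hf : GammaIntegrable ρ θ f) : GammaIntegrable ρ θ fun z => L (f z) :=
  ⟨L.integrable_comp hf.1,
    (L.integrable_comp hf.2.1).congr (ae_of_all _ fun _ => L.map_smul _ _),
    L.integrable_comp hf.2.2⟩

theorem ContinuousLinearMap.map_gammaIntegral [CompleteSpace F] [CompleteSpace F']
    (L : F →L[ℂ] F') {f : ℂ → F} (hf : GammaIntegrable ρ θ f) :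
    L (gammaIntegral ρ θ f) = gammaIntegral ρ θ fun z => L (f z) := by
  unfold gammaIntegral
  simp only [map_add, map_smul, ← L.integral_comp_comm hf.1, ← L.integral_comp_comm hf.2.1,
    ← L.integral_comp_comm hf.2.2]

end ContourIntegral

theorem ResolventAt.exists_coe_eq_gammaIntegral {F : Type*} [NormedAddCommGroup F]
    [NormedSpace ℂ F] [CompleteSpace F] {D : Submodule ℂ F} {A : D →ₗ[ℂ] F} {ρ θ : ℝ}
    {R₀ : F →L[ℂ] F} {R : ℂ → F →L[ℂ] F} {x : ℂ → F} {w : ℂ} (h₀ : ResolventAt D A R₀ 0)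
    (hρ : 0 < ρ) (hθ : θ ∈ Ico 0 π)
    (hR : ∀ l ∈ gammaContour ρ θ, ResolventAt D A (R (-l)) (-l))
    (h₁ : GammaIntegrable ρ θ fun l => (-l) ^ w • x l)
    (h₂ : GammaIntegrable ρ θ fun l => (-l) ^ (1 + w) • R (-l) (x l)) :
    ∃ v : D, (v : F) = gammaIntegral ρ θ (fun l => (-l) ^ w • R (-l) (x l)) ∧
      A v = gammaIntegral ρ θ (fun l => (-l) ^ w • x l) -
        gammaIntegral ρ θ (fun l => (-l) ^ (1 + w) • R (-l) (x l)) := by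
  obtain ⟨v, hv, hAv⟩ := h₀.1 (gammaIntegral ρ θ (fun l => (-l) ^ w • x l) -
    gammaIntegral ρ θ (fun l => (-l) ^ (1 + w) • R (-l) (x l)))
  refine ⟨v, ?_, by simpa using hAv⟩
  rw [hv, map_sub, R₀.map_gammaIntegral h₁, R₀.map_gammaIntegral h₂,
    ← gammaIntegral_sub (R₀.gammaIntegrable_comp h₁) (R₀.gammaIntegrable_comp h₂)]
  refine gammaIntegral_congr hρ hθ fun l hl => ?_
  have hl0 : l ≠ 0 := norm_pos_iff.1 (hρ.trans_le (le_norm_of_mem_gammaContour hl))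
  exact (h₀.neg_cpow_smul_eq_sub (hR l hl) hl0 w (x l)).symm

theorem A_comp_L_representation_general
    {E : Type*} [NormedAddCommGroup E] [NormedSpace ℂ E] [CompleteSpace E]
    (DA DB : Submodule ℂ E) (A : DA →ₗ[ℂ] E) (B : DB →ₗ[ℂ] E)
    (θA θB KA KB : ℝ) (RA RB : ℂ → E →L[ℂ] E)
    (hθB0 : 0 < θB) (hθB : θB < π) (hsum : π < θA + θB)
    (hA : SectorialWith DA A θA KA RA) (hB : SectorialWith DB B θB KB RB)
    (w : ℂ) (hw : w.re < 0) (ρ : ℝ) (hρ : 0 < ρ)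
    (hBdisc : ∀ z : ℂ, ‖z‖ ≤ ρ → ResolventAt DB B (RB z) z ∧
      ∀ u : E, (1 + ‖z‖) * ‖RB z u‖ ≤ (2 * KB + 1) * ‖u‖) :
    ∀ u : E, ∃ v : DA,
      (v : E) = (2 * (π : ℂ) * Complex.I)⁻¹ •
          gammaIntegral ρ θB (fun l => ((-l) ^ w) • RA (-l) (RB l u)) ∧
      A v = (2 * (π : ℂ) * Complex.I)⁻¹ •
            gammaIntegral ρ θB (fun l => ((-l) ^ w) • RB l u) -
          (2 * (π : ℂ) * Complex.I)⁻¹ •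
            gammaIntegral ρ θB (fun l => ((-l) ^ (1 + w)) • RA (-l) (RB l u)) := by
  intro u
  have hKA : 0 ≤ KA := zero_le_one.trans hA.1
  have hRA := hA.isResolventOn
  have hRB : IsResolventOn DB B RB (gammaContour ρ θB) (2 * KB + 1) :=
    ((hB.isResolventOn.mono_const (by linarith [hB.1])).union
      fun z hz => hBdisc z (mem_closedBall_zero_iff.1 hz)).mono
      gammaContour_subset_sectorSet_union_closedBall
  have hneg : ∀ l ∈ gammaContour ρ θB, -l ∈ SectorSet θA := fun l hl =>
    neg_mem_sectorSet_of_mem_gammaContour hθB0 (by linarith) hl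
  have hRBu : ContinuousOn (fun l => RB l u) (gammaContour ρ θB) :=
    (hRB.continuousOn (by linarith [hB.1])).clm_apply continuousOn_const
  have h₁ : GammaIntegrable ρ θB fun l => (-l) ^ w • RB l u :=
    .neg_cpow_smul (n := 1) hρ ⟨hθB0, hθB⟩ hRBu (by simpa using hw)
      fun l hl => by simpa using hRB.norm_mul_norm_apply_le hl u
  have h₂ : GammaIntegrable ρ θB fun l => (-l) ^ (1 + w) • RA (-l) (RB l u) :=
    .neg_cpow_smul (n := 2) hρ ⟨hθB0, hθB⟩
      (((hRA.continuousOn hKA).comp continuousOn_neg hneg).clm_apply hRBu)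
      (by norm_num; linarith)
      fun l hl => hRA.sq_norm_mul_norm_apply_apply_le hRB hKA (hneg l hl) hl u
  obtain ⟨v, hv, hAv⟩ :=
    (hRA 0 (zero_mem_sectorSet (by linarith))).1.exists_coe_eq_gammaIntegral hρ
      ⟨hθB0.le, hθB⟩ (fun l hl => (hRA _ (hneg l hl)).1) h₁ h₂
  exact ⟨(2 * (π : ℂ) * Complex.I)⁻¹ • v, by rw [Submodule.coe_smul, hv],
    by rw [map_smul, hAv, smul_sub]⟩

/-- equation (2.4) in the proof of Theorem 2.6: for `Re w < 0` and `ρ > 0`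
(small enough that the closed disc of radius `ρ` is in the resolvent set of `-B`, hypothesis
`hBdisc`), the operator `L = (1/2πi) ∫_{Γ_{ρ,θ_B}} (A-λ)⁻¹(B+λ)⁻¹ (-λ)^w dλ` maps into `D(A)`
and `A L = B^w - (1/2πi) ∫_{Γ_{ρ,θ_B}} (A-λ)⁻¹(B+λ)⁻¹ (-λ)^{1+w} dλ`. -/
theorem A_comp_L_representation
    {E : Type*} [NormedAddCommGroup E] [NormedSpace ℂ E] [CompleteSpace E]
    (DA DB : Submodule ℂ E) (A : DA →ₗ[ℂ] E) (B : DB →ₗ[ℂ] E)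
    (θA θB KA KB : ℝ) (RA RB : ℂ → E →L[ℂ] E)
    (hθA : θA < π) (hθB0 : 0 < θB) (hθB : θB < π) (hsum : π < θA + θB)
    (hA : SectorialWith DA A θA KA RA) (hB : SectorialWith DB B θB KB RB)
    (hcomm : ∀ z ∈ SectorSet θA, ∀ w ∈ SectorSet θB, ∀ u : E, RA z (RB w u) = RB w (RA z u))
    (w : ℂ) (hw : w.re < 0) (ρ : ℝ) (hρ : 0 < ρ)
    (hBdisc : ∀ z : ℂ, ‖z‖ ≤ ρ → ResolventAt DB B (RB z) z ∧
      ∀ u : E, (1 + ‖z‖) * ‖RB z u‖ ≤ (2 * KB + 1) * ‖u‖) :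
    ∀ u : E, ∃ v : DA,
      (v : E) = (2 * (π : ℂ) * Complex.I)⁻¹ •
          gammaIntegral ρ θB (fun l => ((-l) ^ w) • RA (-l) (RB l u)) ∧
      A v = (2 * (π : ℂ) * Complex.I)⁻¹ •
            gammaIntegral ρ θB (fun l => ((-l) ^ w) • RB l u) -
          (2 * (π : ℂ) * Complex.I)⁻¹ •
            gammaIntegral ρ θB (fun l => ((-l) ^ (1 + w)) • RA (-l) (RB l u)) :=
  A_comp_L_representation_general DA DB A B θA θB KA KB RA RB hθB0 hθB hsum hA hB w hw ρ hρ hBdisc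
end
end

section
/- Let E be a complex Banach space and p ∈ (1,∞). Assume there is C_H > 0 such that for every ε ∈ (0,π) and every f ∈ L^p(ℝ;E) vanishing a.e. outside (−2π,2π), ‖t ↦ ∫_{ε≤|s|≤π} f(t−s)/s ds‖_{L^p((−π,π);E)} ≤ C_H ‖f‖_{L^p(ℝ;E)}. Let U : ℝ → L(E) be strongly measurable with U(0) = I, U(s+t) = U(s)U(t) for all s,t ∈ ℝ, and M := sup_{|s|≤π} ‖U(s)‖ < ∞. Then there exists a constant C depending only on p, C_H and M such that for every r ∈ (0,1], every ε ∈ (0,π), every n ∈ ℕ and all x_0,…,x_n ∈ E: ‖t ↦ ∫_{ε≤|s|≤π} (1/s) Σ_{k=0}^n e^{ikt} (re^{−k})^{−is} U(s) x_k ds‖_{L^p((0,2π);E)} ≤ C ‖t ↦ Σ_{k=0}^n e^{ikt} x_k‖_{L^p((0,2π);E)}. -/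
/-!
Put `F(t) = ∑ₖ e^{ikt} xₖ` and `g(σ) = r^{-iσ} U(σ) F(σ)`. Since `U(s) = U(-t) U(t + s)`, the
integrand at `t` is `r^{it} U(-t)` applied to `s⁻¹ g(t + s)`, so the left side at `t` is
`r^{it} U(-t)` applied to the truncated Hilbert transform, at `π - t`, of `f(v) = g(π - v)` cut off
outside `(-2π, 2π)`. The group law bounds `‖U(-t)‖ ≤ (M + 1)²` for `t ∈ (0, 2π)` and
`‖U(σ)‖ ≤ (M + 1)³` for `σ ∈ (-π, 3π)`, so the hypothesis gives the bound
`C_H (M + 1)⁵ ‖F‖_{L^p(-π, 3π)}`, and by periodicity the interval `(-π, 3π)`, two periods long,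
costs at most a factor `2`.
-/

open Complex MeasureTheory Real Set Filter

open scoped ENNReal

noncomputable section

section OperatorGroup

variable {E : Type*} [NormedAddCommGroup E] [NormedSpace ℂ E] {U : ℝ → E →L[ℂ] E}

theorem norm_apply_le_pow_of_abs_le_mul (hmul : ∀ s t, U (s + t) = (U s).comp (U t))
    (hU0 : U 0 = ContinuousLinearMap.id ℂ E) {a M : ℝ} (hM : 0 ≤ M)
    (hbound : ∀ s, |s| ≤ a → ∀ y, ‖U s y‖ ≤ M * ‖y‖) (m : ℕ) {σ : ℝ} (hσ : |σ| ≤ m * a)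
    (y : E) : ‖U σ y‖ ≤ M ^ m * ‖y‖ := by
  induction m generalizing σ y with
  | zero =>
    obtain rfl : σ = 0 := abs_nonpos_iff.1 (by simpa using hσ)
    simp [hU0]
  | succ m ih =>
    set τ := σ / (m + 1)
    have hm : (0 : ℝ) < m + 1 := by positivity
    have hτ : |τ| ≤ a := by
      rw [abs_div, abs_of_pos hm, div_le_iff₀ hm]; push_cast at hσ; linarith
    have hστ : |σ - τ| ≤ m * a := by
      rw [show σ - τ = m * τ by simp only [τ]; field_simp; ring, abs_mul, Nat.abs_cast]
      gcongr
    calc ‖U σ y‖ = ‖U (σ - τ) (U τ y)‖ := by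
          rw [← ContinuousLinearMap.comp_apply, ← hmul, sub_add_cancel]
      _ ≤ M ^ m * (M * ‖y‖) := (ih hστ _).trans (by gcongr; exact hbound τ hτ y)
      _ = M ^ (m + 1) * ‖y‖ := by ring

theorem integral_apply_comm_of_add {X : Type*} [MeasurableSpace X] {μ : Measure X}
    (hmul : ∀ s t, U (s + t) = (U s).comp (U t)) (hU0 : U 0 = ContinuousLinearMap.id ℂ E)
    (t : ℝ) (φ : X → E) : ∫ x, U t (φ x) ∂μ = U t (∫ x, φ x ∂μ) :=
  have hinv : ∀ s y, U (-s) (U s y) = y := fun s y => by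
    rw [← ContinuousLinearMap.comp_apply, ← hmul, neg_add_cancel, hU0]; rfl
  (ContinuousLinearEquiv.equivOfInverse (U t) (U (-t)) (hinv t)
    (fun y => by simpa using hinv (-t) y)).integral_comp_comm φ

end OperatorGroup

section TrigPoly

variable {E : Type*} [NormedAddCommGroup E] [NormedSpace ℂ E]

def trigPoly (n : ℕ) (x : ℕ → E) (t : ℝ) : E :=
  ∑ k ∈ Finset.range (n + 1), Complex.exp ((k : ℂ) * (t : ℂ) * Complex.I) • x k

theorem continuous_trigPoly (n : ℕ) (x : ℕ → E) : Continuous (trigPoly n x) := by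
  unfold trigPoly; fun_prop

theorem norm_trigPoly_le (n : ℕ) (x : ℕ → E) (t : ℝ) :
    ‖trigPoly n x t‖ ≤ ∑ k ∈ Finset.range (n + 1), ‖x k‖ := by
  refine (norm_sum_le _ _).trans (Finset.sum_le_sum fun k _ => ?_)
  rw [norm_smul, show (k : ℂ) * (t : ℂ) = ((k * t : ℝ) : ℂ) by push_cast; ring,
    Complex.norm_exp_ofReal_mul_I, one_mul]

theorem trigPoly_periodic (n : ℕ) (x : ℕ → E) : Function.Periodic (trigPoly n x) (2 * π) := by
  intro t
  refine Finset.sum_congr rfl fun k _ => ?_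
  rw [show (k : ℂ) * ((t + 2 * π : ℝ) : ℂ) * Complex.I
      = (k : ℂ) * (t : ℂ) * Complex.I + (k : ℤ) * (2 * π * Complex.I) by push_cast; ring,
    Complex.exp_add, Complex.exp_int_mul_two_pi_mul_I, mul_one]

end TrigPoly

section TwistedOrbit

variable {E : Type*} [NormedAddCommGroup E] [NormedSpace ℂ E] {U : ℝ → E →L[ℂ] E}

def twistedOrbit (U : ℝ → E →L[ℂ] E) (a : ℝ) (F : ℝ → E) (σ : ℝ) : E :=
  Complex.exp (-(σ : ℂ) * Complex.I * a) • U σ (F σ)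

theorem norm_twistedOrbit (a : ℝ) (F : ℝ → E) (σ : ℝ) :
    ‖twistedOrbit U a F σ‖ = ‖U σ (F σ)‖ := by
  simp [twistedOrbit, norm_smul, Complex.norm_exp]

theorem stronglyMeasurable_twistedOrbit_trigPoly
    (hUmeas : ∀ y : E, StronglyMeasurable fun s : ℝ => U s y) (a : ℝ) (n : ℕ) (x : ℕ → E) :
    StronglyMeasurable (twistedOrbit U a (trigPoly n x)) := by
  have hsum : (fun σ : ℝ => U σ (trigPoly n x σ))
      = fun σ : ℝ => ∑ k ∈ Finset.range (n + 1),
          Complex.exp ((k : ℂ) * (σ : ℂ) * Complex.I) • U σ (x k) := by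
    ext σ; simp [trigPoly, map_sum]
  refine (Continuous.stronglyMeasurable (by fun_prop)).smul ?_
  rw [hsum]
  exact Finset.stronglyMeasurable_fun_sum _ fun k _ =>
    (Continuous.stronglyMeasurable (by fun_prop)).smul (hUmeas (x k))

theorem inv_smul_sum_eq_smul_apply_twistedOrbit (hmul : ∀ s t, U (s + t) = (U s).comp (U t))
    (n : ℕ) (x : ℕ → E) (a t s : ℝ) :
    (s⁻¹ : ℝ) • ∑ k ∈ Finset.range (n + 1),
        (Complex.exp ((k : ℂ) * (t : ℂ) * Complex.I) *
          Complex.exp (-(s : ℂ) * Complex.I * ((a : ℂ) - (k : ℂ)))) • U s (x k)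
      = Complex.exp ((t : ℂ) * Complex.I * a) •
          U (-t) ((s⁻¹ : ℝ) • twistedOrbit U a (trigPoly n x) (t + s)) := by
  have hUs : ∀ y, U (-t) (U (t + s) y) = U s y := fun y => by
    rw [← ContinuousLinearMap.comp_apply, ← hmul, neg_add_cancel_left]
  simp only [twistedOrbit, trigPoly, map_sum, map_smul, ContinuousLinearMap.map_smul_of_tower,
    hUs, Finset.smul_sum, smul_smul]
  refine Finset.sum_congr rfl fun k _ => ?_
  rw [smul_comm (Complex.exp _) ((s⁻¹ : ℝ))]
  congr 1
  rw [smul_smul, ← Complex.exp_add, ← Complex.exp_add, ← Complex.exp_add]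
  congr 2
  push_cast
  ring

end TwistedOrbit

section Reflection

variable {E : Type*} [NormedAddCommGroup E]

theorem measurePreserving_const_sub_restrict_Ioo (c a b : ℝ) :
    MeasurePreserving (fun t => c - t) (volume.restrict (Ioo a b))
      (volume.restrict (Ioo (c - b) (c - a))) := by
  have h := (Measure.measurePreserving_sub_left volume c).restrict_preimage_emb
    (MeasurableEquiv.subLeft c).measurableEmbedding (Ioo (c - b) (c - a))
  rwa [preimage_const_sub_Ioo, sub_sub_cancel, sub_sub_cancel] at h

theorem eLpNorm_comp_const_sub_restrict_Ioo (H : ℝ → E) (p : ℝ≥0∞) (c a b : ℝ) :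
    eLpNorm (fun t => H (c - t)) p (volume.restrict (Ioo a b))
      = eLpNorm H p (volume.restrict (Ioo (c - b) (c - a))) := by
  rw [← (measurePreserving_const_sub_restrict_Ioo c a b).map_eq]
  exact (MeasurableEquiv.subLeft c).measurableEmbedding.eLpNorm_map_measure.symm

def reflectTrunc (g : ℝ → E) : ℝ → E :=
  (Ioo (-(2 * π)) (2 * π)).indicator fun v => g (π - v)

theorem eLpNorm_reflectTrunc (g : ℝ → E) (p : ℝ≥0∞) :
    eLpNorm (reflectTrunc g) p volume = eLpNorm g p (volume.restrict (Ioo (-π) (3 * π))) := by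
  rw [reflectTrunc, eLpNorm_indicator_eq_eLpNorm_restrict measurableSet_Ioo,
    eLpNorm_comp_const_sub_restrict_Ioo]
  ring_nf

theorem MemLp.reflectTrunc {g : ℝ → E} {p : ℝ≥0∞}
    (hg : MemLp g p (volume.restrict (Ioo (-π) (3 * π)))) : MemLp (reflectTrunc g) p volume := by
  rw [_root_.reflectTrunc, memLp_indicator_iff_restrict measurableSet_Ioo]
  have h := measurePreserving_const_sub_restrict_Ioo π (-(2 * π)) (2 * π)
  rw [show π - 2 * π = -π by ring, show π - -(2 * π) = 3 * π by ring] at h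
  exact hg.comp_measurePreserving h

variable [NormedSpace ℝ E]

def truncHilbert (ε : ℝ) (f : ℝ → E) (t : ℝ) : E :=
  ∫ s in {s : ℝ | ε ≤ |s| ∧ |s| ≤ π}, (s⁻¹ : ℝ) • f (t - s)

theorem truncHilbert_reflectTrunc (g : ℝ → E) (ε : ℝ) {t : ℝ} (ht : t ∈ Ioo 0 (2 * π)) :
    truncHilbert ε (reflectTrunc g) (π - t)
      = ∫ s in {s : ℝ | ε ≤ |s| ∧ |s| ≤ π}, (s⁻¹ : ℝ) • g (t + s) := by
  have hK : MeasurableSet {s : ℝ | ε ≤ |s| ∧ |s| ≤ π} :=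
    (measurableSet_le measurable_const continuous_abs.measurable).inter
      (measurableSet_le continuous_abs.measurable measurable_const)
  refine setIntegral_congr_fun hK fun s hs => ?_
  obtain ⟨hs₁, hs₂⟩ := abs_le.1 hs.2
  have hmem : π - t - s ∈ Ioo (-(2 * π)) (2 * π) := ⟨by linarith [ht.2], by linarith [ht.1]⟩
  simp only [reflectTrunc, indicator_of_mem hmem, show π - (π - t - s) = t + s by ring]

end Reflection

theorem Function.Periodic.lintegral_Ioc_add_eq {f : ℝ → ℝ≥0∞} {T : ℝ} (hf : Function.Periodic f T)
    (hT : 0 < T) (t s : ℝ) : ∫⁻ x in Ioc t (t + T), f x = ∫⁻ x in Ioc s (s + T), f x := by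
  have := Fact.mk hT
  exact (AddCircle.lintegral_preimage T t hf.lift).trans
    (AddCircle.lintegral_preimage T s hf.lift).symm

theorem Function.Periodic.eLpNorm_restrict_Ioo_two_mul_le {E : Type*} [NormedAddCommGroup E]
    {F : ℝ → E} {T : ℝ} (hF : Function.Periodic F T) (hT : 0 < T) {p : ℝ≥0∞} (hp : 1 ≤ p)
    (hp_top : p ≠ ∞) (a b : ℝ) :
    eLpNorm F p (volume.restrict (Ioo a (a + 2 * T)))
      ≤ 2 * eLpNorm F p (volume.restrict (Ioo b (b + T))) := by
  have hper : Function.Periodic (fun x => ‖F x‖ₑ ^ p.toReal) T := hF.comp fun y => ‖y‖ₑ ^ p.toReal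
  have hsplit : ∫⁻ x in Ioo a (a + 2 * T), ‖F x‖ₑ ^ p.toReal
      = 2 * ∫⁻ x in Ioo b (b + T), ‖F x‖ₑ ^ p.toReal := by
    rw [setLIntegral_congr Ioo_ae_eq_Ioc, setLIntegral_congr Ioo_ae_eq_Ioc,
      show a + 2 * T = a + T + T by ring,
      ← Ioc_union_Ioc_eq_Ioc (b := a + T) (by linarith) (by linarith),
      lintegral_union measurableSet_Ioc (Ioc_disjoint_Ioc_of_le le_rfl), two_mul,
      hper.lintegral_Ioc_add_eq hT a b, hper.lintegral_Ioc_add_eq hT (a + T) b]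
  have hp_pos : 0 < p.toReal := ENNReal.toReal_pos (by positivity) hp_top
  rw [eLpNorm_eq_lintegral_rpow_enorm_toReal (by positivity) hp_top,
    eLpNorm_eq_lintegral_rpow_enorm_toReal (by positivity) hp_top, hsplit,
    ENNReal.mul_rpow_of_nonneg _ _ (by positivity)]
  gcongr
  calc (2 : ℝ≥0∞) ^ (1 / p.toReal) ≤ 2 ^ (1 : ℝ) := by
        gcongr
        · norm_num
        · rw [div_le_one hp_pos]; exact ENNReal.toReal_mono hp_top hp |>.trans_eq' (by simp)
    _ = 2 := ENNReal.rpow_one 2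

section Estimates

variable {E : Type*} [NormedAddCommGroup E] [NormedSpace ℂ E] {U : ℝ → E →L[ℂ] E}

theorem setIntegral_inv_smul_sum_eq_smul_truncHilbert (hmul : ∀ s t, U (s + t) = (U s).comp (U t))
    (hU0 : U 0 = ContinuousLinearMap.id ℂ E) (n : ℕ) (x : ℕ → E) (a ε : ℝ) {t : ℝ}
    (ht : t ∈ Ioo 0 (2 * π)) :
    ∫ s in {s : ℝ | ε ≤ |s| ∧ |s| ≤ π}, (s⁻¹ : ℝ) • ∑ k ∈ Finset.range (n + 1),
        (Complex.exp ((k : ℂ) * (t : ℂ) * Complex.I) *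
          Complex.exp (-(s : ℂ) * Complex.I * ((a : ℂ) - (k : ℂ)))) • U s (x k)
      = Complex.exp ((t : ℂ) * Complex.I * a) •
          U (-t) (truncHilbert ε (reflectTrunc (twistedOrbit U a (trigPoly n x))) (π - t)) := by
  rw [truncHilbert_reflectTrunc _ _ ht, ← integral_apply_comm_of_add hmul hU0, ← integral_smul]
  simp only [inv_smul_sum_eq_smul_apply_twistedOrbit hmul]

theorem eLpNorm_setIntegral_inv_smul_sum_le (hmul : ∀ s t, U (s + t) = (U s).comp (U t))
    (hU0 : U 0 = ContinuousLinearMap.id ℂ E) {N : ℝ} (hN : 0 ≤ N)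
    (hbound : ∀ s, |s| ≤ π → ∀ y, ‖U s y‖ ≤ N * ‖y‖) (n : ℕ) (x : ℕ → E) (a ε : ℝ)
    (p : ℝ≥0∞) :
    eLpNorm (fun t : ℝ => ∫ s in {s : ℝ | ε ≤ |s| ∧ |s| ≤ π}, (s⁻¹ : ℝ) •
        ∑ k ∈ Finset.range (n + 1), (Complex.exp ((k : ℂ) * (t : ℂ) * Complex.I) *
          Complex.exp (-(s : ℂ) * Complex.I * ((a : ℂ) - (k : ℂ)))) • U s (x k))
        p (volume.restrict (Ioo 0 (2 * π)))
      ≤ ENNReal.ofReal (N ^ 2) * eLpNorm (truncHilbert ε (reflectTrunc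
          (twistedOrbit U a (trigPoly n x)))) p (volume.restrict (Ioo (-π) π)) := by
  set H := truncHilbert ε (reflectTrunc (twistedOrbit U a (trigPoly n x)))
  have hpointwise : ∀ᵐ t : ℝ ∂volume.restrict (Ioo 0 (2 * π)),
      ‖∫ s in {s : ℝ | ε ≤ |s| ∧ |s| ≤ π}, (s⁻¹ : ℝ) •
        ∑ k ∈ Finset.range (n + 1), (Complex.exp ((k : ℂ) * (t : ℂ) * Complex.I) *
          Complex.exp (-(s : ℂ) * Complex.I * ((a : ℂ) - (k : ℂ)))) • U s (x k)‖
        ≤ N ^ 2 * ‖H (π - t)‖ :=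
    (ae_restrict_iff' measurableSet_Ioo).2 <| ae_of_all _ fun t ht => by
      rw [setIntegral_inv_smul_sum_eq_smul_truncHilbert hmul hU0 n x a ε ht, norm_smul,
        show ‖Complex.exp (t * Complex.I * a)‖ = 1 by simp [Complex.norm_exp], one_mul]
      refine norm_apply_le_pow_of_abs_le_mul hmul hU0 hN hbound 2 ?_ _
      rw [abs_neg, abs_of_pos ht.1]; push_cast; linarith [ht.2]
  calc _ ≤ ENNReal.ofReal (N ^ 2) * eLpNorm (fun t => H (π - t)) p
        (volume.restrict (Ioo 0 (2 * π))) := eLpNorm_le_mul_eLpNorm_of_ae_le_mul hpointwise p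
    _ = ENNReal.ofReal (N ^ 2) * eLpNorm H p (volume.restrict (Ioo (-π) π)) := by
        rw [eLpNorm_comp_const_sub_restrict_Ioo, sub_zero, show π - 2 * π = -π by ring]

theorem ae_norm_twistedOrbit_le (hmul : ∀ s t, U (s + t) = (U s).comp (U t))
    (hU0 : U 0 = ContinuousLinearMap.id ℂ E) {N : ℝ} (hN : 0 ≤ N)
    (hbound : ∀ s, |s| ≤ π → ∀ y, ‖U s y‖ ≤ N * ‖y‖) (a : ℝ) (F : ℝ → E) :
    ∀ᵐ σ ∂volume.restrict (Ioo (-π) (3 * π)), ‖twistedOrbit U a F σ‖ ≤ N ^ 3 * ‖F σ‖ :=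
  (ae_restrict_iff' measurableSet_Ioo).2 <| ae_of_all _ fun σ hσ => by
    rw [norm_twistedOrbit]
    refine norm_apply_le_pow_of_abs_le_mul hmul hU0 hN hbound 3 ?_ _
    rw [abs_le]; push_cast; constructor <;> linarith [hσ.1, hσ.2]

theorem memLp_twistedOrbit_trigPoly (hUmeas : ∀ y : E, StronglyMeasurable fun s : ℝ => U s y)
    (hmul : ∀ s t, U (s + t) = (U s).comp (U t)) (hU0 : U 0 = ContinuousLinearMap.id ℂ E)
    {N : ℝ} (hN : 0 ≤ N) (hbound : ∀ s, |s| ≤ π → ∀ y, ‖U s y‖ ≤ N * ‖y‖) (a : ℝ) (n : ℕ)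
    (x : ℕ → E) (p : ℝ≥0∞) :
    MemLp (twistedOrbit U a (trigPoly n x)) p (volume.restrict (Ioo (-π) (3 * π))) :=
  (MemLp.of_bound (continuous_trigPoly n x).aestronglyMeasurable _
    (ae_of_all _ (norm_trigPoly_le n x))).of_le_mul
    (stronglyMeasurable_twistedOrbit_trigPoly hUmeas a n x).aestronglyMeasurable
    (ae_norm_twistedOrbit_le hmul hU0 hN hbound a _)

theorem eLpNorm_twistedOrbit_le (hmul : ∀ s t, U (s + t) = (U s).comp (U t))
    (hU0 : U 0 = ContinuousLinearMap.id ℂ E) {N : ℝ} (hN : 0 ≤ N)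
    (hbound : ∀ s, |s| ≤ π → ∀ y, ‖U s y‖ ≤ N * ‖y‖) (a : ℝ) {F : ℝ → E}
    (hF : Function.Periodic F (2 * π)) {p : ℝ≥0∞} (hp : 1 ≤ p) (hp_top : p ≠ ∞) :
    eLpNorm (twistedOrbit U a F) p (volume.restrict (Ioo (-π) (3 * π)))
      ≤ ENNReal.ofReal (N ^ 3) * (2 * eLpNorm F p (volume.restrict (Ioo 0 (2 * π)))) := by
  have hperiod := hF.eLpNorm_restrict_Ioo_two_mul_le two_pi_pos hp hp_top (-π) 0
  rw [zero_add, show -π + 2 * (2 * π) = 3 * π by ring] at hperiod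
  calc _ ≤ ENNReal.ofReal (N ^ 3) * eLpNorm F p (volume.restrict (Ioo (-π) (3 * π))) :=
        eLpNorm_le_mul_eLpNorm_of_ae_le_mul (ae_norm_twistedOrbit_le hmul hU0 hN hbound a F) p
    _ ≤ _ := by gcongr

end Estimates

theorem truncated_hilbert_transform_step_general
    {E : Type*} [NormedAddCommGroup E] [NormedSpace ℂ E]
    (p : ℝ) (hp : 1 < p) (CH : ℝ) (hCH : 0 < CH)
    (hHilb : ∀ ε : ℝ, 0 < ε → ε < π → ∀ f : ℝ → E,
      MemLp f (ENNReal.ofReal p) volume →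
      (∀ᵐ t : ℝ, t ∉ Ioo (-(2 * π)) (2 * π) → f t = 0) →
      eLpNorm (fun t : ℝ => ∫ s in {s : ℝ | ε ≤ |s| ∧ |s| ≤ π}, (s⁻¹ : ℝ) • f (t - s))
          (ENNReal.ofReal p) (volume.restrict (Ioo (-π) π))
        ≤ ENNReal.ofReal CH * eLpNorm f (ENNReal.ofReal p) volume)
    (M : ℝ) (hM : 0 ≤ M) :
    ∃ C : ℝ, 0 < C ∧ ∀ U : ℝ → E →L[ℂ] E,
      (∀ x : E, StronglyMeasurable fun s : ℝ => U s x) →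
      U 0 = ContinuousLinearMap.id ℂ E →
      (∀ s t : ℝ, U (s + t) = (U s).comp (U t)) →
      (∀ s : ℝ, |s| ≤ π → ∀ x : E, ‖U s x‖ ≤ M * ‖x‖) →
      ∀ r : ℝ, 0 < r → r ≤ 1 → ∀ ε : ℝ, 0 < ε → ε < π → ∀ n : ℕ, ∀ x : ℕ → E,
        eLpNorm (fun t : ℝ => ∫ s in {s : ℝ | ε ≤ |s| ∧ |s| ≤ π},
            (s⁻¹ : ℝ) • ∑ k ∈ Finset.range (n + 1),
              (Complex.exp ((k : ℂ) * (t : ℂ) * Complex.I) *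
                Complex.exp (-(s : ℂ) * Complex.I * ((Real.log r : ℂ) - (k : ℂ)))) •
                U s (x k))
          (ENNReal.ofReal p) (volume.restrict (Ioo (0 : ℝ) (2 * π)))
        ≤ ENNReal.ofReal C *
          eLpNorm (fun t : ℝ => ∑ k ∈ Finset.range (n + 1),
              Complex.exp ((k : ℂ) * (t : ℂ) * Complex.I) • x k)
            (ENNReal.ofReal p) (volume.restrict (Ioo (0 : ℝ) (2 * π))) := by
  refine ⟨2 * CH * (M + 1) ^ 5, by positivity, ?_⟩
  intro U hUmeas hU0 hmul hUb r _ _ ε hε hεπ n x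
  have hN : 0 ≤ M + 1 := by linarith
  have hbound : ∀ s, |s| ≤ π → ∀ y, ‖U s y‖ ≤ (M + 1) * ‖y‖ := fun s hs y =>
    (hUb s hs y).trans (by gcongr; linarith)
  have hq : 1 ≤ ENNReal.ofReal p := ENNReal.one_le_ofReal.2 hp.le
  set g := twistedOrbit U (Real.log r) (trigPoly n x)
  have hHilb_g := hHilb ε hε hεπ (reflectTrunc g)
    (MemLp.reflectTrunc (memLp_twistedOrbit_trigPoly hUmeas hmul hU0 hN hbound _ n x _))
    (ae_of_all _ fun v hv => indicator_of_notMem hv _)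
  rw [eLpNorm_reflectTrunc] at hHilb_g
  calc _ ≤ ENNReal.ofReal ((M + 1) ^ 2) *
          eLpNorm (truncHilbert ε (reflectTrunc g)) (ENNReal.ofReal p)
            (volume.restrict (Ioo (-π) π)) :=
        eLpNorm_setIntegral_inv_smul_sum_le hmul hU0 hN hbound n x _ ε _
    _ ≤ ENNReal.ofReal ((M + 1) ^ 2) * (ENNReal.ofReal CH * (ENNReal.ofReal ((M + 1) ^ 3) *
          (2 * eLpNorm (trigPoly n x) (ENNReal.ofReal p) (volume.restrict (Ioo 0 (2 * π)))))) := by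
        refine mul_le_mul_right (hHilb_g.trans (mul_le_mul_right ?_ _)) _
        exact eLpNorm_twistedOrbit_le hmul hU0 hN hbound _ (trigPoly_periodic n x) hq
          ENNReal.ofReal_ne_top
    _ = ENNReal.ofReal (2 * CH * (M + 1) ^ 5) *
          eLpNorm (trigPoly n x) (ENNReal.ofReal p) (volume.restrict (Ioo 0 (2 * π))) := by
        rw [show 2 * CH * (M + 1) ^ 5 = (M + 1) ^ 2 * (CH * ((M + 1) ^ 3 * 2)) by ring,
          ENNReal.ofReal_mul (by positivity), ENNReal.ofReal_mul hCH.le,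
          ENNReal.ofReal_mul (by positivity), ENNReal.ofReal_ofNat]
        ring

/-- estimate (2.11), the Hilbert-transform step in the proof of Theorem 2.8:
if the truncated Hilbert transform is uniformly bounded on `L^p(ℝ; E)` (hypothesis `hHilb`,
encoding the UMD property) then there is `C > 0`, depending only on `p`, `C_H` and `M`, such
that for every strongly measurable multiplicative family `U` with `U(0) = I` and
`sup_{|s| ≤ π} ‖U(s)‖ ≤ M`, every `r ∈ (0,1]`, `ε ∈ (0,π)`, `n ∈ ℕ` and `x_0, …, x_n ∈ E`:
`‖t ↦ ∫_{ε≤|s|≤π} (1/s) Σ_k e^{ikt} (re^{-k})^{-is} U(s)x_k ds‖_{L^p(0,2π;E)}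
  ≤ C ‖t ↦ Σ_k e^{ikt} x_k‖_{L^p(0,2π;E)}`. -/
theorem truncated_hilbert_transform_step
    {E : Type*} [NormedAddCommGroup E] [NormedSpace ℂ E] [CompleteSpace E]
    (p : ℝ) (hp : 1 < p) (CH : ℝ) (hCH : 0 < CH)
    (hHilb : ∀ ε : ℝ, 0 < ε → ε < π → ∀ f : ℝ → E,
      MemLp f (ENNReal.ofReal p) volume →
      (∀ᵐ t : ℝ, t ∉ Ioo (-(2 * π)) (2 * π) → f t = 0) →
      eLpNorm (fun t : ℝ => ∫ s in {s : ℝ | ε ≤ |s| ∧ |s| ≤ π}, (s⁻¹ : ℝ) • f (t - s))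
          (ENNReal.ofReal p) (volume.restrict (Ioo (-π) π))
        ≤ ENNReal.ofReal CH * eLpNorm f (ENNReal.ofReal p) volume)
    (M : ℝ) (hM : 0 ≤ M) :
    ∃ C : ℝ, 0 < C ∧ ∀ U : ℝ → E →L[ℂ] E,
      (∀ x : E, StronglyMeasurable fun s : ℝ => U s x) →
      U 0 = ContinuousLinearMap.id ℂ E →
      (∀ s t : ℝ, U (s + t) = (U s).comp (U t)) →
      (∀ s : ℝ, |s| ≤ π → ∀ x : E, ‖U s x‖ ≤ M * ‖x‖) →
      ∀ r : ℝ, 0 < r → r ≤ 1 → ∀ ε : ℝ, 0 < ε → ε < π → ∀ n : ℕ, ∀ x : ℕ → E,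
        eLpNorm (fun t : ℝ => ∫ s in {s : ℝ | ε ≤ |s| ∧ |s| ≤ π},
            (s⁻¹ : ℝ) • ∑ k ∈ Finset.range (n + 1),
              (Complex.exp ((k : ℂ) * (t : ℂ) * Complex.I) *
                Complex.exp (-(s : ℂ) * Complex.I * ((Real.log r : ℂ) - (k : ℂ)))) •
                U s (x k))
          (ENNReal.ofReal p) (volume.restrict (Ioo (0 : ℝ) (2 * π)))
        ≤ ENNReal.ofReal C *
          eLpNorm (fun t : ℝ => ∑ k ∈ Finset.range (n + 1),
              Complex.exp ((k : ℂ) * (t : ℂ) * Complex.I) • x k)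
            (ENNReal.ofReal p) (volume.restrict (Ioo (0 : ℝ) (2 * π))) :=
  truncated_hilbert_transform_step_general p hp CH hCH hHilb M hM
end
end

section
/- Let E be a complex Banach space, p ∈ [1,∞) and τ > 0. For every φ ∈ [0, π/2) there exists K ≥ 1 such that for every λ ∈ Λ_φ and every g ∈ L^p((0,τ);E): (1+|λ|)·‖T_λ g‖_{L^p((0,τ);E)} ≤ K·‖g‖_{L^p((0,τ);E)}. In particular the derivative operator B = d/dt on L^p((0,τ);E) with domain {f ∈ W^{1,p}((0,τ);E) : f(0)=0} is sectorial of angle φ for every φ ∈ [0, π/2). -/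
/-!
`T_λ g` is the convolution of `g` with the kernel `s ↦ e^{-λ s} 1_{s > 0}`, whose modulus
`expKernel (Re λ)` integrates to at most `min τ (1 / Re λ)` over any interval of length `τ`.
Schur's test (Hölder against the kernel, then Tonelli) turns this into
`‖T_λ g‖_p ≤ min τ (1 / Re λ) ‖g‖_p`, and on `Λ_φ` we have `Re λ ≥ |λ| cos φ`, so
`(1 + |λ|) min τ (1 / Re λ) ≤ max τ 1 + 1 / cos φ`.
-/

open Complex MeasureTheory Real Set

noncomputable section

open scoped ENNReal

section Schur

variable {α β : Type*} [MeasurableSpace α] [MeasurableSpace β] {μ : Measure α} {ν : Measure β}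
  {p : ℝ}

theorem ENNReal.lintegral_mul_rpow_le (hp : 1 ≤ p) {k G : α → ℝ≥0∞} (hk : AEMeasurable k μ)
    (hG : AEMeasurable G μ) :
    (∫⁻ x, k x * G x ∂μ) ^ p ≤ (∫⁻ x, k x ∂μ) ^ (p - 1) * ∫⁻ x, k x * G x ^ p ∂μ := by
  have hp0 : 0 < p := by linarith
  have hinv : 0 ≤ 1 - 1 / p := by rw [sub_nonneg, div_le_one hp0]; exact hp
  have split : ∀ x, k x ^ (1 - 1 / p) * (k x * G x ^ p) ^ (1 / p) = k x * G x := fun x => by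
    rw [ENNReal.mul_rpow_of_nonneg _ _ (by positivity), ← ENNReal.rpow_mul,
      mul_one_div_cancel hp0.ne', ENNReal.rpow_one, ← mul_assoc,
      ← ENNReal.rpow_add_of_nonneg _ _ hinv (by positivity), sub_add_cancel, ENNReal.rpow_one]
  have holder := ENNReal.lintegral_mul_norm_pow_le hk (hk.mul (hG.pow_const p)) hinv
    (by positivity) (sub_add_cancel 1 (1 / p))
  simp only [Pi.mul_apply, split] at holder
  calc (∫⁻ x, k x * G x ∂μ) ^ p
      ≤ ((∫⁻ x, k x ∂μ) ^ (1 - 1 / p) * (∫⁻ x, k x * G x ^ p ∂μ) ^ (1 / p)) ^ p :=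
        ENNReal.rpow_le_rpow holder hp0.le
    _ = (∫⁻ x, k x ∂μ) ^ (p - 1) * ∫⁻ x, k x * G x ^ p ∂μ := by
        rw [ENNReal.mul_rpow_of_nonneg _ _ hp0.le, ← ENNReal.rpow_mul, ← ENNReal.rpow_mul,
          one_div_mul_cancel hp0.ne', ENNReal.rpow_one, sub_mul, one_mul,
          one_div_mul_cancel hp0.ne']

variable [SFinite μ] [SFinite ν]

theorem lintegral_rpow_lintegral_mul_le (hp : 1 ≤ p) {K : α → β → ℝ≥0∞}
    (hK : Measurable (Function.uncurry K)) {G : β → ℝ≥0∞} (hG : AEMeasurable G ν) {C : ℝ≥0∞}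
    (hrow : ∀ t, ∫⁻ x, K t x ∂ν ≤ C) (hcol : ∀ x, ∫⁻ t, K t x ∂μ ≤ C) :
    ∫⁻ t, (∫⁻ x, K t x * G x ∂ν) ^ p ∂μ ≤ C ^ p * ∫⁻ x, G x ^ p ∂ν := by
  have hp1 : 0 ≤ p - 1 := by linarith
  have hGp : AEMeasurable (fun x => G x ^ p) ν := hG.pow_const p
  calc ∫⁻ t, (∫⁻ x, K t x * G x ∂ν) ^ p ∂μ
      ≤ ∫⁻ t, C ^ (p - 1) * ∫⁻ x, K t x * G x ^ p ∂ν ∂μ := by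
        refine lintegral_mono fun t => ?_
        grw [ENNReal.lintegral_mul_rpow_le hp hK.of_uncurry_left.aemeasurable hG, hrow t]
    _ = C ^ (p - 1) * ∫⁻ x, (∫⁻ t, K t x ∂μ) * G x ^ p ∂ν := by
        have hKG : AEMeasurable (Function.uncurry fun t x => K t x * G x ^ p) (μ.prod ν) :=
          hK.aemeasurable.mul hGp.comp_snd
        have hrowint : AEMeasurable (fun t => ∫⁻ x, K t x * G x ^ p ∂ν) μ :=
          hKG.lintegral_prod_right'
        rw [lintegral_const_mul'' _ hrowint, lintegral_lintegral_swap hKG]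
        congr 1
        exact lintegral_congr fun x => lintegral_mul_const _ hK.of_uncurry_right
    _ ≤ C ^ (p - 1) * ∫⁻ x, C * G x ^ p ∂ν := by
        gcongr with x
        exact hcol x
    _ = C ^ p * ∫⁻ x, G x ^ p ∂ν := by
        rw [lintegral_const_mul'' _ hGp, ← mul_assoc]
        congr 1
        simpa using (ENNReal.rpow_add_of_nonneg (x := C) (p - 1) 1 hp1 zero_le_one).symm

theorem eLpNorm_lintegral_mul_le (hp : 1 ≤ p) {K : α → β → ℝ≥0∞}
    (hK : Measurable (Function.uncurry K)) {G : β → ℝ≥0∞} (hG : AEMeasurable G ν) {C : ℝ≥0∞}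
    (hrow : ∀ t, ∫⁻ x, K t x ∂ν ≤ C) (hcol : ∀ x, ∫⁻ t, K t x ∂μ ≤ C) :
    eLpNorm (fun t => ∫⁻ x, K t x * G x ∂ν) (ENNReal.ofReal p) μ
      ≤ C * eLpNorm G (ENNReal.ofReal p) ν := by
  have hp0 : 0 < p := by linarith
  have hp_ne : ENNReal.ofReal p ≠ 0 := by simpa using hp0
  simp only [eLpNorm_eq_lintegral_rpow_enorm_toReal hp_ne ENNReal.ofReal_ne_top,
    ENNReal.toReal_ofReal hp0.le, enorm_eq_self]
  calc (∫⁻ t, (∫⁻ x, K t x * G x ∂ν) ^ p ∂μ) ^ (1 / p)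
      ≤ (C ^ p * ∫⁻ x, G x ^ p ∂ν) ^ (1 / p) := by
        gcongr
        exact lintegral_rpow_lintegral_mul_le hp hK hG hrow hcol
    _ = C * (∫⁻ x, G x ^ p ∂ν) ^ (1 / p) := by
        rw [ENNReal.mul_rpow_of_nonneg _ _ (by positivity), ← ENNReal.rpow_mul,
          mul_one_div_cancel hp0.ne', ENNReal.rpow_one]

end Schur

section Kernel

variable {a : ℝ}

def expKernel (a : ℝ) : ℝ → ℝ≥0∞ :=
  (Ioi 0).indicator fun s => ENNReal.ofReal (Real.exp (-a * s))

theorem measurable_expKernel (a : ℝ) : Measurable (expKernel a) :=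
  (by fun_prop : Measurable fun s => ENNReal.ofReal (Real.exp (-a * s))).indicator
    measurableSet_Ioi

theorem expKernel_le_one (ha : 0 ≤ a) (s : ℝ) : expKernel a s ≤ 1 := by
  refine indicator_apply_le' (fun hs => ?_) fun _ => zero_le_one
  exact ENNReal.ofReal_le_one.2 (Real.exp_le_one_iff.2 (by nlinarith [mem_Ioi.1 hs]))

theorem lintegral_expKernel (ha : 0 < a) : ∫⁻ s, expKernel a s = (ENNReal.ofReal a)⁻¹ := by
  have hna : -a < 0 := neg_neg_of_pos ha
  rw [expKernel, lintegral_indicator measurableSet_Ioi,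
    ← ofReal_integral_eq_lintegral_ofReal (integrableOn_exp_mul_Ioi hna 0)
      (ae_of_all _ fun _ => (Real.exp_pos _).le),
    integral_exp_mul_Ioi hna 0, ← ENNReal.ofReal_inv_of_pos ha]
  simp

theorem setLIntegral_expKernel_comp_le (ha : 0 ≤ a) {f : ℝ → ℝ}
    (hf : MeasurePreserving f volume volume) (S : Set ℝ) :
    ∫⁻ x in S, expKernel a (f x) ≤ min (volume S) (ENNReal.ofReal a)⁻¹ := by
  refine le_min ?_ ?_
  · calc ∫⁻ x in S, expKernel a (f x) ≤ ∫⁻ _ in S, 1 :=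
          lintegral_mono fun x => expKernel_le_one ha _
      _ = volume S := setLIntegral_one S
  · rcases ha.eq_or_lt with rfl | ha
    · simp
    calc ∫⁻ x in S, expKernel a (f x) ≤ ∫⁻ x, expKernel a (f x) := setLIntegral_le_lintegral _ _
      _ = ∫⁻ s, expKernel a s := hf.lintegral_comp (measurable_expKernel a)
      _ = (ENNReal.ofReal a)⁻¹ := lintegral_expKernel ha

theorem enorm_cexp_mul_sub (l : ℂ) {x t : ℝ} (hxt : x < t) :
    ‖cexp (l * (x - t))‖ₑ = expKernel l.re (t - x) := by
  rw [expKernel, indicator_of_mem (mem_Ioi.2 (sub_pos.2 hxt)), ← ofReal_norm,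
    Complex.norm_exp]
  congr 2
  simp only [mul_re, sub_re, ofReal_re, sub_im, ofReal_im, sub_self, mul_zero, sub_zero]
  ring

end Kernel

section Resolvent

variable {E : Type*} [NormedAddCommGroup E] [NormedSpace ℂ E]

def derivResolvent (l : ℂ) (g : ℝ → E) (t : ℝ) : E :=
  ∫ x in Ioo 0 t, cexp (l * (x - t)) • g x

theorem enorm_derivResolvent_le (l : ℂ) (g : ℝ → E) {t τ : ℝ} (ht : t ≤ τ) :
    ‖derivResolvent l g t‖ₑ ≤ ∫⁻ x in Ioo 0 τ, expKernel l.re (t - x) * ‖g x‖ₑ :=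
  calc ‖derivResolvent l g t‖ₑ ≤ ∫⁻ x in Ioo 0 t, ‖cexp (l * (x - t)) • g x‖ₑ :=
        enorm_integral_le_lintegral_enorm _
    _ = ∫⁻ x in Ioo 0 t, expKernel l.re (t - x) * ‖g x‖ₑ := by
        refine setLIntegral_congr_fun measurableSet_Ioo fun x hx => ?_
        rw [enorm_smul, enorm_cexp_mul_sub l hx.2]
    _ ≤ ∫⁻ x in Ioo 0 τ, expKernel l.re (t - x) * ‖g x‖ₑ :=
        lintegral_mono_set (Ioo_subset_Ioo_right ht)

theorem eLpNorm_derivResolvent_le {p : ℝ} (hp : 1 ≤ p) {l : ℂ} (hl : 0 ≤ l.re) {τ : ℝ}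
    {g : ℝ → E} (hg : AEStronglyMeasurable g (volume.restrict (Ioo 0 τ))) :
    eLpNorm (derivResolvent l g) (ENNReal.ofReal p) (volume.restrict (Ioo 0 τ))
      ≤ min (ENNReal.ofReal τ) (ENNReal.ofReal l.re)⁻¹ *
          eLpNorm g (ENNReal.ofReal p) (volume.restrict (Ioo 0 τ)) := by
  have hvol : volume (Ioo 0 τ) = ENNReal.ofReal τ := by simp
  have hK : Measurable (Function.uncurry fun t x : ℝ => expKernel l.re (t - x)) :=
    (measurable_expKernel _).comp (measurable_fst.sub measurable_snd)
  have hpointwise : ∀ᵐ t ∂volume.restrict (Ioo 0 τ), ‖derivResolvent l g t‖ₑ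
      ≤ ‖∫⁻ x in Ioo 0 τ, expKernel l.re (t - x) * ‖g x‖ₑ‖ₑ := by
    filter_upwards [self_mem_ae_restrict measurableSet_Ioo] with t ht
    exact enorm_derivResolvent_le l g ht.2.le
  refine (eLpNorm_mono_enorm_ae hpointwise).trans ?_
  rw [← eLpNorm_enorm g, ← hvol]
  refine eLpNorm_lintegral_mul_le hp hK hg.enorm (fun t => ?_) (fun x => ?_)
  · exact setLIntegral_expKernel_comp_le hl (Measure.measurePreserving_sub_left volume t) _
  · exact setLIntegral_expKernel_comp_le hl (measurePreserving_sub_right volume x) _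

end Resolvent

section Sector

variable {φ : ℝ} {l : ℂ}

theorem norm_mul_cos_le_re_of_mem_sectorSet (hφ : φ ≤ π) (hl : l ∈ SectorSet φ) :
    ‖l‖ * Real.cos φ ≤ l.re := by
  rw [← norm_mul_cos_arg l, ← Real.cos_abs l.arg]
  gcongr
  exact Real.cos_le_cos_of_nonneg_of_le_pi (abs_nonneg _) hφ hl

theorem ofReal_one_add_norm_mul_min_le (hφ : φ < π / 2) (hl : l ∈ SectorSet φ) (τ : ℝ) :
    ENNReal.ofReal (1 + ‖l‖) * min (ENNReal.ofReal τ) (ENNReal.ofReal l.re)⁻¹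
      ≤ ENNReal.ofReal (max τ 1 + (Real.cos φ)⁻¹) := by
  have hφ0 : 0 ≤ φ := (abs_nonneg _).trans hl
  have hcos : 0 < Real.cos φ := Real.cos_pos_of_mem_Ioo ⟨by linarith [pi_pos], hφ⟩
  have hre := norm_mul_cos_le_re_of_mem_sectorSet (by linarith [pi_pos]) hl
  have hratio : ENNReal.ofReal ‖l‖ * (ENNReal.ofReal l.re)⁻¹ ≤ ENNReal.ofReal (Real.cos φ)⁻¹ := by
    rcases eq_or_ne l 0 with rfl | hl0
    · simp
    have hre_pos : 0 < l.re := (mul_pos (norm_pos_iff.2 hl0) hcos).trans_le hre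
    rw [← ENNReal.ofReal_inv_of_pos hre_pos, ← ENNReal.ofReal_mul (norm_nonneg _)]
    refine ENNReal.ofReal_le_ofReal ?_
    rw [← div_eq_mul_inv, div_le_iff₀ hre_pos, inv_mul_eq_div, le_div_iff₀ hcos]
    exact hre
  calc ENNReal.ofReal (1 + ‖l‖) * min (ENNReal.ofReal τ) (ENNReal.ofReal l.re)⁻¹
      = min (ENNReal.ofReal τ) (ENNReal.ofReal l.re)⁻¹
          + ENNReal.ofReal ‖l‖ * min (ENNReal.ofReal τ) (ENNReal.ofReal l.re)⁻¹ := by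
        rw [ENNReal.ofReal_add zero_le_one (norm_nonneg _), add_mul, ENNReal.ofReal_one, one_mul]
    _ ≤ ENNReal.ofReal (max τ 1) + ENNReal.ofReal (Real.cos φ)⁻¹ := by
        gcongr
        · exact (min_le_left _ _).trans (ENNReal.ofReal_le_ofReal (le_max_left _ _))
        · exact (mul_le_mul_right (min_le_right _ _) _).trans hratio
    _ = ENNReal.ofReal (max τ 1 + (Real.cos φ)⁻¹) :=
        (ENNReal.ofReal_add (zero_le_one.trans (le_max_right _ _)) (inv_nonneg.2 hcos.le)).symm

end Sector

theorem derivative_operator_sectorial_general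
    {E : Type*} [NormedAddCommGroup E] [NormedSpace ℂ E]
    (p : ℝ) (hp : 1 ≤ p) (τ : ℝ) :
    ∀ φ : ℝ, 0 ≤ φ → φ < π / 2 → ∃ K : ℝ, 1 ≤ K ∧
      ∀ l ∈ SectorSet φ, ∀ g : ℝ → E,
        MemLp g (ENNReal.ofReal p) (volume.restrict (Ioo (0 : ℝ) τ)) →
        ENNReal.ofReal (1 + ‖l‖) *
            eLpNorm (fun t : ℝ => ∫ x in Ioo (0 : ℝ) t,
                Complex.exp (l * ((x : ℂ) - (t : ℂ))) • g x)
              (ENNReal.ofReal p) (volume.restrict (Ioo (0 : ℝ) τ))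
          ≤ ENNReal.ofReal K * eLpNorm g (ENNReal.ofReal p) (volume.restrict (Ioo (0 : ℝ) τ)) := by
  intro φ hφ0 hφ
  have hcos : 0 ≤ Real.cos φ := Real.cos_nonneg_of_mem_Icc ⟨by linarith [pi_pos], hφ.le⟩
  refine ⟨max τ 1 + (Real.cos φ)⁻¹, ?_, fun l hl g hg => ?_⟩
  · linarith [le_max_right τ 1, inv_nonneg.2 hcos]
  have hre : 0 ≤ l.re := abs_arg_le_pi_div_two_iff.1 (hl.trans hφ.le)
  calc ENNReal.ofReal (1 + ‖l‖) * eLpNorm (derivResolvent l g) (ENNReal.ofReal p) _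
      ≤ ENNReal.ofReal (1 + ‖l‖) * (min (ENNReal.ofReal τ) (ENNReal.ofReal l.re)⁻¹ *
          eLpNorm g (ENNReal.ofReal p) (volume.restrict (Ioo 0 τ))) := by
        gcongr
        exact eLpNorm_derivResolvent_le hp hre hg.1
    _ ≤ _ := by
        rw [← mul_assoc]
        gcongr
        exact ofReal_one_add_norm_mul_min_le hφ hl τ

/-- sectoriality of the derivative operator, Section 3: for every
`φ ∈ [0, π/2)` there is `K ≥ 1` such that for all `λ ∈ Λ_φ` and `g ∈ L^p(0,τ;E)`,
`(1+|λ|)‖T_λ g‖_{L^p} ≤ K ‖g‖_{L^p}`, where `(T_λ g)(t) = ∫_0^t e^{λ(x-t)} g(x) dx` is the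
resolvent `(B+λ)⁻¹` of the derivative operator `B = d/dt` with domain
`{f ∈ W^{1,p}(0,τ;E) : f(0) = 0}`; hence `B` is sectorial of every angle `φ < π/2`. -/
theorem derivative_operator_sectorial
    {E : Type*} [NormedAddCommGroup E] [NormedSpace ℂ E] [CompleteSpace E]
    (p : ℝ) (hp : 1 ≤ p) (τ : ℝ) (hτ : 0 < τ) :
    ∀ φ : ℝ, 0 ≤ φ → φ < π / 2 → ∃ K : ℝ, 1 ≤ K ∧
      ∀ l ∈ SectorSet φ, ∀ g : ℝ → E,
        MemLp g (ENNReal.ofReal p) (volume.restrict (Ioo (0 : ℝ) τ)) →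
        ENNReal.ofReal (1 + ‖l‖) *
            eLpNorm (fun t : ℝ => ∫ x in Ioo (0 : ℝ) t,
                Complex.exp (l * ((x : ℂ) - (t : ℂ))) • g x)
              (ENNReal.ofReal p) (volume.restrict (Ioo (0 : ℝ) τ))
          ≤ ENNReal.ofReal K * eLpNorm g (ENNReal.ofReal p) (volume.restrict (Ioo (0 : ℝ) τ)) :=
  derivative_operator_sectorial_general p hp τ
end
end

section
/- Let H be a complex Hilbert space and let A be sectorial of angle θ ∈ [0,π) with constant K. Then for every φ ∈ [−θ,θ], every r ∈ [1/e,1], every n ∈ ℕ and all x_0,…,x_n ∈ H: ‖t ↦ Σ_{k=0}^n e^{ikt}(I + re^{−k}e^{iφ}A)^{−1} x_k‖_{L²((0,2π);H)} ≤ K ‖t ↦ Σ_{k=0}^n e^{ikt} x_k‖_{L²((0,2π);H)}. In particular, on a Hilbert space every sectorial operator of angle θ is T*-sectorial of angle θ with exponent 2, with the choice a_k(t) = e^{ikt}. -/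
open Complex MeasureTheory Real Set Filter

noncomputable section

variable {E : Type*} [NormedAddCommGroup E] [NormedSpace ℂ E] [CompleteSpace E]

/-!
By orthogonality of the exponentials `e^{ikt}` on `(0, 2π)`, the `L²(0, 2π; H)` norm of a
trigonometric polynomial `Σ_k e^{ikt} y_k` with coefficients in a Hilbert space is
`√(2π Σ_k ‖y_k‖²)`. The inequality therefore reduces to the coefficientwise bound
`‖(I + μA)⁻¹ x_k‖ ≤ K ‖x_k‖`, which holds because `μ⁻¹ = r⁻¹ e^k e^{-iφ}` lies in the sector
`Λ_θ` and `|μ⁻¹| ≤ 1 + |μ⁻¹|`.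
-/

open scoped InnerProductSpace ComplexConjugate

theorem integral_exp_int_mul_I_Ioo_two_pi (m : ℤ) :
    ∫ t in Ioo (0 : ℝ) (2 * π), cexp (m * I * t) = if m = 0 then ((2 * π : ℝ) : ℂ) else 0 := by
  split_ifs with hm
  · simp [hm, Real.two_pi_pos.le]
  · have hc : (m : ℂ) * I ≠ 0 := mul_ne_zero (by exact_mod_cast hm) I_ne_zero
    rw [← integral_Ioc_eq_integral_Ioo, ← intervalIntegral.integral_of_le Real.two_pi_pos.le,
      integral_exp_mul_complex hc]
    have hperiod : (m : ℂ) * I * ((2 * π : ℝ) : ℂ) = m * (2 * π * I) := by push_cast; ring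
    rw [hperiod, Complex.exp_int_mul_two_pi_mul_I]
    simp

theorem integral_conj_exp_mul_exp_Ioo_two_pi (j k : ℕ) :
    ∫ t in Ioo (0 : ℝ) (2 * π), conj (cexp (j * t * I)) * cexp (k * t * I) =
      if j = k then ((2 * π : ℝ) : ℂ) else 0 := by
  have hprod : ∀ t : ℝ, conj (cexp (j * t * I)) * cexp (k * t * I) =
      cexp (((k : ℤ) - j : ℤ) * I * t) := fun t => by
    rw [← Complex.exp_conj, ← Complex.exp_add]
    simp only [map_mul, conj_I, conj_ofReal, map_natCast]
    push_cast
    ring_nf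
  simp_rw [hprod, integral_exp_int_mul_I_Ioo_two_pi, sub_eq_zero, Nat.cast_inj, eq_comm (a := k)]

def trigSum {H : Type*} [AddCommGroup H] [Module ℂ H] (s : Finset ℕ) (y : ℕ → H) (t : ℝ) : H :=
  ∑ k ∈ s, cexp (k * t * I) • y k

section NormedSpace

variable {H : Type*} [NormedAddCommGroup H] [NormedSpace ℂ H]

theorem continuous_trigSum (s : Finset ℕ) (y : ℕ → H) : Continuous (trigSum s y) :=
  continuous_finsetSum _ fun _ _ => by fun_prop

theorem norm_trigSum_le (s : Finset ℕ) (y : ℕ → H) (t : ℝ) :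
    ‖trigSum s y t‖ ≤ ∑ k ∈ s, ‖y k‖ := by
  refine (norm_sum_le _ _).trans (Finset.sum_le_sum fun k _ => ?_)
  rw [norm_smul, show (k : ℂ) * t * I = ((k * t : ℝ) : ℂ) * I by push_cast; ring,
    norm_exp_ofReal_mul_I, one_mul]

end NormedSpace

section InnerProductSpace

variable {H : Type*} [NormedAddCommGroup H] [InnerProductSpace ℂ H]

theorem inner_trigSum_self (s : Finset ℕ) (y : ℕ → H) (t : ℝ) :
    ⟪trigSum s y t, trigSum s y t⟫_ℂ =
      ∑ j ∈ s, ∑ k ∈ s, (conj (cexp (j * t * I)) * cexp (k * t * I)) * ⟪y j, y k⟫_ℂ := by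
  rw [trigSum, sum_inner]
  refine Finset.sum_congr rfl fun j _ => ?_
  rw [inner_smul_left, inner_sum, Finset.mul_sum]
  refine Finset.sum_congr rfl fun k _ => ?_
  rw [inner_smul_right, ← mul_assoc]

theorem integral_norm_trigSum_sq (s : Finset ℕ) (y : ℕ → H) :
    ∫ t in Ioo (0 : ℝ) (2 * π), ‖trigSum s y t‖ ^ 2 = 2 * π * ∑ k ∈ s, ‖y k‖ ^ 2 := by
  have hint : ∀ j k : ℕ, IntegrableOn
      (fun t : ℝ => (conj (cexp (j * t * I)) * cexp (k * t * I)) * ⟪y j, y k⟫_ℂ)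
      (Ioo 0 (2 * π)) :=
    fun j k => (Continuous.integrableOn_Icc (by fun_prop)).mono_set Ioo_subset_Icc_self
  have hinner : ∫ t in Ioo (0 : ℝ) (2 * π), ⟪trigSum s y t, trigSum s y t⟫_ℂ =
      ((2 * π : ℝ) : ℂ) * ∑ k ∈ s, ⟪y k, y k⟫_ℂ := by
    simp_rw [inner_trigSum_self]
    rw [integral_finsetSum _ fun j _ => integrable_finsetSum _ fun k _ => hint j k]
    simp_rw [integral_finsetSum _ fun k _ => hint _ k, integral_mul_const,
      integral_conj_exp_mul_exp_Ioo_two_pi, ite_mul, zero_mul, Finset.sum_ite_eq, Finset.mul_sum]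
    exact Finset.sum_congr rfl fun k hk => by rw [if_pos hk]
  have hinteg : Integrable (fun t => ⟪trigSum s y t, trigSum s y t⟫_ℂ)
      (volume.restrict (Ioo (0 : ℝ) (2 * π))) :=
    ((continuous_trigSum s y).inner (continuous_trigSum s y)).integrableOn_Icc.mono_set
      Ioo_subset_Icc_self
  calc ∫ t in Ioo (0 : ℝ) (2 * π), ‖trigSum s y t‖ ^ 2
      = RCLike.re (∫ t in Ioo (0 : ℝ) (2 * π), ⟪trigSum s y t, trigSum s y t⟫_ℂ) := by
        rw [← integral_re hinteg]
        simp_rw [inner_self_eq_norm_sq]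
    _ = 2 * π * ∑ k ∈ s, ‖y k‖ ^ 2 := by
        rw [hinner]
        simp [inner_self_eq_norm_sq_to_K, ← ofReal_pow]

theorem eLpNorm_trigSum (s : Finset ℕ) (y : ℕ → H) :
    eLpNorm (trigSum s y) 2 (volume.restrict (Ioo (0 : ℝ) (2 * π))) =
      ENNReal.ofReal (√(2 * π * ∑ k ∈ s, ‖y k‖ ^ 2)) := by
  have hmem : MemLp (trigSum s y) 2 (volume.restrict (Ioo (0 : ℝ) (2 * π))) :=
    MemLp.of_bound (continuous_trigSum s y).aestronglyMeasurable _
      (ae_of_all _ (norm_trigSum_le s y))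
  rw [hmem.eLpNorm_eq_integral_rpow_norm two_ne_zero ENNReal.ofNat_ne_top,
    ← integral_norm_trigSum_sq, Real.sqrt_eq_rpow]
  norm_num

theorem eLpNorm_trigSum_le_of_norm_le {s : Finset ℕ} {x y : ℕ → H} {K : ℝ} (hK : 0 ≤ K)
    (h : ∀ k ∈ s, ‖y k‖ ≤ K * ‖x k‖) :
    eLpNorm (trigSum s y) 2 (volume.restrict (Ioo (0 : ℝ) (2 * π))) ≤
      ENNReal.ofReal K * eLpNorm (trigSum s x) 2 (volume.restrict (Ioo (0 : ℝ) (2 * π))) := by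
  rw [eLpNorm_trigSum, eLpNorm_trigSum, ← ENNReal.ofReal_mul hK]
  refine ENNReal.ofReal_le_ofReal ?_
  calc √(2 * π * ∑ k ∈ s, ‖y k‖ ^ 2)
      ≤ √(K ^ 2 * (2 * π * ∑ k ∈ s, ‖x k‖ ^ 2)) := by
        refine Real.sqrt_le_sqrt ?_
        have hsum : ∑ k ∈ s, ‖y k‖ ^ 2 ≤ K ^ 2 * ∑ k ∈ s, ‖x k‖ ^ 2 := by
          rw [Finset.mul_sum]
          exact Finset.sum_le_sum fun k hk => by rw [← mul_pow]; gcongr; exact h k hk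
        rw [mul_left_comm]
        exact mul_le_mul_of_nonneg_left hsum (by positivity)
    _ = K * √(2 * π * ∑ k ∈ s, ‖x k‖ ^ 2) := by
        rw [Real.sqrt_mul (sq_nonneg K), Real.sqrt_sq hK]

end InnerProductSpace

theorem inv_ofReal_mul_exp_mem_sectorSet {θ φ r : ℝ} (hθ : θ < π) (hφ : |φ| ≤ θ) (hr : 0 < r) :
    ((r : ℂ) * cexp (φ * I))⁻¹ ∈ SectorSet θ := by
  have hφ' : -φ ∈ Ioc (-π) (-π + 2 * π) := by
    constructor <;> linarith [abs_le.1 hφ]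
  have hinv : ((r : ℂ) * cexp (φ * I))⁻¹ = ((r⁻¹ : ℝ) : ℂ) * cexp ((-φ : ℝ) * I) := by
    push_cast
    rw [mul_inv, ← Complex.exp_neg, neg_mul]
  show |arg _| ≤ θ
  rw [hinv, arg_real_mul _ (inv_pos.2 hr), arg_exp_mul_I,
    toIocMod_eq_self _ |>.2 hφ', abs_neg]
  exact hφ

theorem norm_resolventI_apply_le {E : Type*} [NormedAddCommGroup E] [NormedSpace ℂ E]
    {D : Submodule ℂ E} {A : D →ₗ[ℂ] E} {θ K : ℝ} {R : ℂ → E →L[ℂ] E}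
    (hA : SectorialWith D A θ K R) {μ : ℂ} (hμ : μ⁻¹ ∈ SectorSet θ) (u : E) :
    ‖resolventI R μ u‖ ≤ K * ‖u‖ :=
  calc ‖resolventI R μ u‖ = ‖μ⁻¹‖ * ‖R μ⁻¹ u‖ := by
        rw [resolventI, smul_apply, norm_smul]
    _ ≤ (1 + ‖μ⁻¹‖) * ‖R μ⁻¹ u‖ := by gcongr; linarith
    _ ≤ K * ‖u‖ := (hA.2.2.2 μ⁻¹ hμ).2 u

theorem hilbert_sectorial_TStar_general
    {H : Type*} [NormedAddCommGroup H] [InnerProductSpace ℂ H]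
    (D : Submodule ℂ H) (A : D →ₗ[ℂ] H) (θ K : ℝ) (R : ℂ → H →L[ℂ] H)
    (hθπ : θ < π) (hsec : SectorialWith D A θ K R) :
    ∀ φ : ℝ, |φ| ≤ θ → ∀ r : ℝ, Real.exp (-1) ≤ r → r ≤ 1 → ∀ n : ℕ, ∀ x : ℕ → H,
      eLpNorm (fun t : ℝ => ∑ k ∈ Finset.range (n + 1),
          Complex.exp ((k : ℂ) * (t : ℂ) * Complex.I) •
            resolventI R (((r * Real.exp (-(k : ℝ)) : ℝ) : ℂ) *
              Complex.exp ((φ : ℂ) * Complex.I)) (x k))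
        (2 : ENNReal) (volume.restrict (Ioo (0 : ℝ) (2 * π)))
      ≤ ENNReal.ofReal K *
        eLpNorm (fun t : ℝ => ∑ k ∈ Finset.range (n + 1),
            Complex.exp ((k : ℂ) * (t : ℂ) * Complex.I) • x k)
          (2 : ENNReal) (volume.restrict (Ioo (0 : ℝ) (2 * π))) := by
  intro φ hφ r hr _ n x
  have hr0 : 0 < r := (Real.exp_pos _).trans_le hr
  exact eLpNorm_trigSum_le_of_norm_le (zero_le_one.trans hsec.1) fun k _ =>
    norm_resolventI_apply_le hsec (inv_ofReal_mul_exp_mem_sectorSet hθπ hφ (by positivity)) (x k)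

/-- Corollary 3.4, first part: on a Hilbert space every sectorial operator
of angle `θ` with constant `K` satisfies, for all `φ ∈ [-θ,θ]`, `r ∈ [1/e,1]` and
`x_0, …, x_n ∈ H`,
`‖t ↦ Σ_k e^{ikt}(I + re^{-k}e^{iφ}A)⁻¹x_k‖_{L²(0,2π;H)} ≤ K ‖t ↦ Σ_k e^{ikt}x_k‖_{L²(0,2π;H)}`;
in particular it is `T*`-sectorial of angle `θ` with exponent `2` and `a_k(t) = e^{ikt}`. -/
theorem hilbert_sectorial_TStar
    {H : Type*} [NormedAddCommGroup H] [InnerProductSpace ℂ H] [CompleteSpace H]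
    (D : Submodule ℂ H) (A : D →ₗ[ℂ] H) (θ K : ℝ) (R : ℂ → H →L[ℂ] H)
    (hθ0 : 0 ≤ θ) (hθπ : θ < π) (hsec : SectorialWith D A θ K R) :
    ∀ φ : ℝ, |φ| ≤ θ → ∀ r : ℝ, Real.exp (-1) ≤ r → r ≤ 1 → ∀ n : ℕ, ∀ x : ℕ → H,
      eLpNorm (fun t : ℝ => ∑ k ∈ Finset.range (n + 1),
          Complex.exp ((k : ℂ) * (t : ℂ) * Complex.I) •
            resolventI R (((r * Real.exp (-(k : ℝ)) : ℝ) : ℂ) *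
              Complex.exp ((φ : ℂ) * Complex.I)) (x k))
        (2 : ENNReal) (volume.restrict (Ioo (0 : ℝ) (2 * π)))
      ≤ ENNReal.ofReal K *
        eLpNorm (fun t : ℝ => ∑ k ∈ Finset.range (n + 1),
            Complex.exp ((k : ℂ) * (t : ℂ) * Complex.I) • x k)
          (2 : ENNReal) (volume.restrict (Ioo (0 : ℝ) (2 * π))) :=
  hilbert_sectorial_TStar_general D A θ K R hθπ hsec
end
end
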